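/- arXiv:math/0611406 — 10 statements merged into one kernel-verified Lean document; each statement's English description precedes it below -/
import Mathlib

section
/- Let (E, σ, τ) be a chord diagram, let p : E, and let (E', σ', τ') be the first-Reidemeister-move insertion at p. Then (E', σ', τ') is orientable if and only if (E, σ, τ) is orientable. (This is the statement that the result of any first Reidemeister move, performed in either direction, applied to an orientable chord diagram is orientable.) -/
/-- An orientation of a chord diagram `(E, σ, τ)`: a 2-coloring of the arcs that
changes both across each endpoint (along the base) and across each chord. -/
def IsOrientation {E : Type*} (σ τ : Equiv.Perm E) (c : E → Bool) : Prop :=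
  ∀ x : E, c (σ x) ≠ c x ∧ c (τ x) ≠ c x

/-- A chord diagram `(E, σ, τ)` is orientable if it admits an orientation. -/
def Orientable {E : Type*} (σ τ : Equiv.Perm E) : Prop :=
  ∃ c : E → Bool, IsOrientation σ τ c

/-- The result `(E ⊕ Fin 2, σ', τ')` of a first-Reidemeister-move insertion at `p`
is orientable if and only if the original chord diagram `(E, σ, τ)` is orientable. -/
theorem firstReidemeisterMove_orientable_iff
    {E : Type*} [Fintype E] [DecidableEq E]
    (σ τ : Equiv.Perm E)
    (hτinv : τ * τ = 1) (hτfix : ∀ x : E, τ x ≠ x)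
    (p : E)
    (σ' τ' : Equiv.Perm (E ⊕ Fin 2))
    (hσp : σ' (Sum.inl p) = Sum.inr 0)
    (hσ0 : σ' (Sum.inr 0) = Sum.inr 1)
    (hσ1 : σ' (Sum.inr 1) = Sum.inl (σ p))
    (hσz : ∀ z : E, z ≠ p → σ' (Sum.inl z) = Sum.inl (σ z))
    (hτ0 : τ' (Sum.inr 0) = Sum.inr 1)
    (hτ1 : τ' (Sum.inr 1) = Sum.inr 0)
    (hτz : ∀ z : E, τ' (Sum.inl z) = Sum.inl (τ z)) :
    Orientable σ' τ' ↔ Orientable σ τ := by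
  constructor
  · rintro ⟨c', hc'⟩
    refine ⟨fun x => c' (Sum.inl x), fun x => ?_⟩
    constructor
    · by_cases hx : x = p
      · have h1 := (hc' (Sum.inl p)).1; rw [hσp] at h1
        have h2 := (hc' (Sum.inr 0)).1; rw [hσ0] at h2
        have h3 := (hc' (Sum.inr 1)).1; rw [hσ1] at h3
        show c' (Sum.inl (σ x)) ≠ c' (Sum.inl x)
        rw [hx]
        revert h1 h2 h3
        cases c' (Sum.inl (σ p)) <;> cases c' (Sum.inl p) <;>
          cases c' (Sum.inr 0) <;> cases c' (Sum.inr 1) <;> simp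
      · simpa [hσz x hx] using (hc' (Sum.inl x)).1
    · simpa [hτz x] using (hc' (Sum.inl x)).2
  · rintro ⟨c, hc⟩
    refine ⟨fun y => Sum.elim c (fun i => if i = 0 then !(c p) else c p) y, fun y => ?_⟩
    match y with
    | Sum.inl z =>
      constructor
      · by_cases hz : z = p
        · subst hz; rw [hσp]; simp
        · rw [hσz z hz]; exact (hc z).1
      · rw [hτz z]; exact (hc z).2
    | Sum.inr 0 => refine ⟨?_, ?_⟩ <;> simp [hσ0, hτ0]
    | Sum.inr 1 =>
      refine ⟨?_, ?_⟩
      · rw [hσ1]; simpa using (hc p).1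
      · rw [hτ1]; simp
end

section
/- Let (E, σ, τ) be an orientable chord diagram and let x, y, z : E be such that the six points x, σ x, y, σ y, z, σ z are pairwise distinct and the set S = {x, σ x, y, σ y, z, σ z} is invariant under τ. Let ρ = (Equiv.swap x (σ x)) * (Equiv.swap y (σ y)) * (Equiv.swap z (σ z)). Then ρ * τ * ρ is again a fixed-point-free involution and the chord diagram (E, σ, ρ * τ * ρ) is orientable. (This is the combinatorial form of the theorem that the result of any third Reidemeister move applied to an orientable chord diagram is orientable: the third Reidemeister move exchanges the two endpoints within each of three σ-adjacent pairs carrying the three chords involved.) -/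
/-- The third Reidemeister move (combinatorial form): exchanging the two endpoints
within each of three σ-adjacent pairs carrying the three chords involved preserves
orientability of a chord diagram, and yields again a fixed-point-free involution. -/
theorem thirdReidemeisterMove_orientable
    {E : Type*} [Fintype E] [DecidableEq E]
    (σ τ : Equiv.Perm E)
    (hτinv : τ * τ = 1) (hτfix : ∀ a : E, τ a ≠ a)
    (hor : Orientable σ τ)
    (x y z : E)
    (hdist : ([x, σ x, y, σ y, z, σ z] : List E).Pairwise (· ≠ ·))
    (hSinv : ∀ a ∈ ({x, σ x, y, σ y, z, σ z} : Set E),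
      τ a ∈ ({x, σ x, y, σ y, z, σ z} : Set E)) :
    ((Equiv.swap x (σ x) * Equiv.swap y (σ y) * Equiv.swap z (σ z)) * τ *
        (Equiv.swap x (σ x) * Equiv.swap y (σ y) * Equiv.swap z (σ z))) *
      ((Equiv.swap x (σ x) * Equiv.swap y (σ y) * Equiv.swap z (σ z)) * τ *
        (Equiv.swap x (σ x) * Equiv.swap y (σ y) * Equiv.swap z (σ z))) = 1 ∧
    (∀ a : E,
      ((Equiv.swap x (σ x) * Equiv.swap y (σ y) * Equiv.swap z (σ z)) * τ *
        (Equiv.swap x (σ x) * Equiv.swap y (σ y) * Equiv.swap z (σ z))) a ≠ a) ∧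
    Orientable σ
      ((Equiv.swap x (σ x) * Equiv.swap y (σ y) * Equiv.swap z (σ z)) * τ *
        (Equiv.swap x (σ x) * Equiv.swap y (σ y) * Equiv.swap z (σ z))) := by
  simp only [List.pairwise_cons, List.mem_cons, List.not_mem_nil, or_false,
    List.mem_singleton, forall_eq_or_imp, forall_eq, List.Pairwise.nil] at hdist
  obtain ⟨⟨h12, h13, h14, h15, h16⟩, ⟨h23, h24, h25, h26⟩, ⟨h34, h35, h36⟩,
    ⟨h45, h46⟩, h56, -⟩ := hdist
  set ρ : Equiv.Perm E := Equiv.swap x (σ x) * Equiv.swap y (σ y) * Equiv.swap z (σ z)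
    with hρdef
  have hττ : ∀ a, τ (τ a) = a := by
    intro a
    have := congrArg (fun f : Equiv.Perm E => f a) hτinv
    simpa using this
  -- membership predicate
  have hρ_app : ∀ a, ρ a = Equiv.swap x (σ x) (Equiv.swap y (σ y) (Equiv.swap z (σ z) a)) := by
    intro a; rfl
  have hρx : ρ x = σ x := by
    rw [hρ_app, Equiv.swap_apply_of_ne_of_ne h15 h16,
      Equiv.swap_apply_of_ne_of_ne h13 h14, Equiv.swap_apply_left]
  have hρσx : ρ (σ x) = x := by
    rw [hρ_app, Equiv.swap_apply_of_ne_of_ne h25 h26,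
      Equiv.swap_apply_of_ne_of_ne h23 h24, Equiv.swap_apply_right]
  have hρy : ρ y = σ y := by
    rw [hρ_app, Equiv.swap_apply_of_ne_of_ne h35 h36, Equiv.swap_apply_left,
      Equiv.swap_apply_of_ne_of_ne (Ne.symm h14) (Ne.symm h24)]
  have hρσy : ρ (σ y) = y := by
    rw [hρ_app, Equiv.swap_apply_of_ne_of_ne h45 h46, Equiv.swap_apply_right,
      Equiv.swap_apply_of_ne_of_ne (Ne.symm h13) (Ne.symm h23)]
  have hρz : ρ z = σ z := by
    rw [hρ_app, Equiv.swap_apply_left,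
      Equiv.swap_apply_of_ne_of_ne (Ne.symm h36) (Ne.symm h46),
      Equiv.swap_apply_of_ne_of_ne (Ne.symm h16) (Ne.symm h26)]
  have hρσz : ρ (σ z) = z := by
    rw [hρ_app, Equiv.swap_apply_right,
      Equiv.swap_apply_of_ne_of_ne (Ne.symm h35) (Ne.symm h45),
      Equiv.swap_apply_of_ne_of_ne (Ne.symm h15) (Ne.symm h25)]
  have hρfix : ∀ a, a ≠ x → a ≠ σ x → a ≠ y → a ≠ σ y → a ≠ z → a ≠ σ z → ρ a = a := by
    intro a a1 a2 a3 a4 a5 a6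
    rw [hρ_app, Equiv.swap_apply_of_ne_of_ne a5 a6,
      Equiv.swap_apply_of_ne_of_ne a3 a4, Equiv.swap_apply_of_ne_of_ne a1 a2]
  have hρρ : ∀ a, ρ (ρ a) = a := by
    intro a
    by_cases a1 : a = x; · rw [a1, hρx, hρσx]
    by_cases a2 : a = σ x; · rw [a2, hρσx, hρx]
    by_cases a3 : a = y; · rw [a3, hρy, hρσy]
    by_cases a4 : a = σ y; · rw [a4, hρσy, hρy]
    by_cases a5 : a = z; · rw [a5, hρz, hρσz]
    by_cases a6 : a = σ z; · rw [a6, hρσz, hρz]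
    rw [hρfix a a1 a2 a3 a4 a5 a6, hρfix a a1 a2 a3 a4 a5 a6]
  refine ⟨?_, ?_, ?_⟩
  · ext a
    simp only [Equiv.Perm.mul_apply, Equiv.Perm.one_apply]
    rw [hρρ, hττ, hρρ]
  · intro a h
    simp only [Equiv.Perm.mul_apply] at h
    have h' : ρ (ρ (τ (ρ a))) = ρ a := congrArg ρ h
    rw [hρρ] at h'
    exact hτfix (ρ a) h'
  · obtain ⟨c, hc⟩ := hor
    refine ⟨c, fun a => ⟨(hc a).1, ?_⟩⟩
    simp only [Equiv.Perm.mul_apply]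
    -- membership in S
    have memS : ∀ a : E, a ∈ ({x, σ x, y, σ y, z, σ z} : Set E) ↔
        (a = x ∨ a = σ x ∨ a = y ∨ a = σ y ∨ a = z ∨ a = σ z) := by
      intro a; simp [Set.mem_insert_iff]
    have hρS : ∀ b : E, b ∈ ({x, σ x, y, σ y, z, σ z} : Set E) →
        ρ b ∈ ({x, σ x, y, σ y, z, σ z} : Set E) ∧ c (ρ b) ≠ c b := by
      intro b hb
      rw [memS] at hb
      rcases hb with h | h | h | h | h | h <;> subst h <;>
        simp only [hρx, hρσx, hρy, hρσy, hρz, hρσz, memS] <;>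
        first
          | exact ⟨by tauto, (hc _).1⟩
          | exact ⟨by tauto, Ne.symm (hc _).1⟩
    by_cases haS : a ∈ ({x, σ x, y, σ y, z, σ z} : Set E)
    · obtain ⟨hb1, hb2⟩ := hρS a haS
      obtain ⟨hb3, hb4⟩ := hρS (τ (ρ a)) (hSinv _ hb1)
      have hb5 : c (τ (ρ a)) ≠ c (ρ a) := (hc (ρ a)).2
      revert hb2 hb4 hb5
      cases c (ρ (τ (ρ a))) <;> cases c (τ (ρ a)) <;> cases c (ρ a) <;> cases c a <;> simp
    · rw [memS] at haS
      push_neg at haS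
      obtain ⟨a1, a2, a3, a4, a5, a6⟩ := haS
      rw [hρfix a a1 a2 a3 a4 a5 a6]
      have hτa : τ a ∉ ({x, σ x, y, σ y, z, σ z} : Set E) := by
        intro hmem
        have := hSinv _ hmem
        rw [hττ, memS] at this
        tauto
      rw [memS] at hτa
      push_neg at hτa
      obtain ⟨b1, b2, b3, b4, b5, b6⟩ := hτa
      rw [hρfix _ b1 b2 b3 b4 b5 b6]
      exact (hc a).2
end

section
/- Let (E, σ, τ) be an orientable chord diagram containing a second-Reidemeister-move configuration: four pairwise distinct points x₁, x₂ = σ x₁, y₁, y₂ = σ y₁ with τ x₁ ∈ {y₁, y₂} (and hence τ x₂ equal to the other of y₁, y₂). Let E' be the subtype {z : E // z ∉ {x₁, x₂, y₁, y₂}}, let σ' : Equiv.Perm E' be the first-return permutation σ' z = σ^k z for the least k ≥ 1 with σ^k z ∈ E', and let τ' be the restriction of τ to E' (well defined since {x₁, x₂, y₁, y₂} is τ-invariant). Then (E', σ', τ') is orientable. (All second Reidemeister moves decreasing the number of chords preserve orientability.) -/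
/-- A second Reidemeister move decreasing the number of chords preserves orientability:
removing from an orientable chord diagram a second-Reidemeister configuration
`x₁, x₂ = σ x₁, y₁, y₂ = σ y₁` (with `τ x₁ ∈ {y₁, y₂}` and hence `τ x₂` equal to the
other of `y₁, y₂`), where the permutation on the remaining endpoints is the
first-return map of `σ` and the involution is the restriction of `τ` (well defined
since `{x₁, x₂, y₁, y₂}` is `τ`-invariant), yields an orientable chord diagram. -/
theorem secondReidemeisterMove_remove_orientable
    {E : Type*} [Fintype E] [DecidableEq E]
    (σ τ : Equiv.Perm E)
    (hτinv : τ * τ = 1) (hτfix : ∀ a : E, τ a ≠ a)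
    (hor : Orientable σ τ)
    (x₁ y₁ : E)
    (hdist : ([x₁, σ x₁, y₁, σ y₁] : List E).Pairwise (· ≠ ·))
    (hpair : (τ x₁ = y₁ ∧ τ (σ x₁) = σ y₁) ∨ (τ x₁ = σ y₁ ∧ τ (σ x₁) = y₁))
    (σ' τ' : Equiv.Perm {z : E // z ∉ ({x₁, σ x₁, y₁, σ y₁} : Set E)})
    (hσ' : ∀ z : {z : E // z ∉ ({x₁, σ x₁, y₁, σ y₁} : Set E)},
      ∃ k : ℕ, 1 ≤ k ∧ ((σ' z : E) = (σ ^ k) (z : E)) ∧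
        ∀ j : ℕ, 1 ≤ j → j < k → (σ ^ j) (z : E) ∈ ({x₁, σ x₁, y₁, σ y₁} : Set E))
    (hτ' : ∀ z : {z : E // z ∉ ({x₁, σ x₁, y₁, σ y₁} : Set E)}, (τ' z : E) = τ (z : E)) :
    Orientable σ' τ' := by
  obtain ⟨c, hc⟩ := hor
  -- distinctness facts
  have hd : x₁ ≠ σ x₁ ∧ x₁ ≠ y₁ ∧ x₁ ≠ σ y₁ ∧ σ x₁ ≠ y₁ ∧ y₁ ≠ σ y₁ := by
    simp [List.pairwise_cons] at hdist; tauto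
  obtain ⟨d1, d2, d3, d4, d6⟩ := hd
  have d5 : σ x₁ ≠ σ y₁ := fun h => d2 (σ.injective h)
  have hcs : ∀ x : E, c (σ x) = !c x := by
    intro x
    have h := (hc x).1
    cases hx : c x <;> cases hy : c (σ x) <;> simp_all
  have memS : ∀ b : E, b ∈ ({x₁, σ x₁, y₁, σ y₁} : Set E) ↔
      (b = x₁ ∨ b = σ x₁ ∨ b = y₁ ∨ b = σ y₁) := by
    intro b; simp [Set.mem_insert_iff]
  have pe : ∀ (n : ℕ) (b : E), (σ ^ (n+1)) b = σ ((σ ^ n) b) := by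
    intro n b; rw [pow_succ']; rfl
  refine ⟨fun z => c z.val, fun z => ⟨?_, ?_⟩⟩
  · -- σ' part
    obtain ⟨k, hk1, hk, hmid⟩ := hσ' z
    set a := (z : E) with ha
    have haS : a ∉ ({x₁, σ x₁, y₁, σ y₁} : Set E) := z.2
    have hkS : (σ ^ k) a ∉ ({x₁, σ x₁, y₁, σ y₁} : Set E) := hk ▸ (σ' z).2
    have e1 : (σ ^ 1) a = σ a := by rw [pe]; simp
    have e2 : (σ ^ 2) a = σ (σ a) := by rw [pe, e1]
    have e3 : (σ ^ 3) a = σ (σ (σ a)) := by rw [pe, e2]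
    have e4 : (σ ^ 4) a = σ (σ (σ (σ a))) := by rw [pe, e3]
    have e5 : (σ ^ 5) a = σ (σ (σ (σ (σ a)))) := by rw [pe, e4]
    have hkodd : k = 1 ∨ k = 3 ∨ k = 5 := by
      by_cases h1 : σ a ∈ ({x₁, σ x₁, y₁, σ y₁} : Set E)
      · -- σ a ∈ S, so σ a = x₁ or σ a = y₁
        have hk1' : k ≠ 1 := by
          intro h; rw [h, e1] at hkS; exact hkS h1
        have hσa : σ a = x₁ ∨ σ a = y₁ := by
          rcases (memS _).1 h1 with h | h | h | h
          · left; exact h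
          · exact absurd ((memS a).2 (Or.inl (σ.injective h))) haS
          · right; exact h
          · exact absurd ((memS a).2 (Or.inr (Or.inr (Or.inl (σ.injective h))))) haS
        rcases hσa with hx | hy
        · -- σ a = x₁, σ² a = σ x₁
          have hk2' : k ≠ 2 := by
            intro h; rw [h, e2, hx] at hkS
            exact hkS ((memS _).2 (Or.inr (Or.inl rfl)))
          by_cases h3 : σ (σ x₁) ∈ ({x₁, σ x₁, y₁, σ y₁} : Set E)
          · -- σ³ a ∈ S; show σ (σ x₁) = y₁
            have hy1 : σ (σ x₁) = y₁ := by
              rcases (memS _).1 h3 with h | h | h | h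
              · -- σ (σ x₁) = x₁ = σ a ⇒ σ x₁ = a ∈ S, contra
                have h' : σ x₁ = a := σ.injective (h.trans hx.symm)
                exact absurd ((memS a).2 (Or.inr (Or.inl h'.symm))) haS
              · exact absurd (σ.injective h) d1.symm
              · exact h
              · exact absurd (σ.injective h) d4
            -- σ³ a = y₁, σ⁴ a = σ y₁, σ⁵ a ∉ S
            have hk3' : k ≠ 3 := by
              intro h; rw [h, e3, hx, hy1] at hkS
              exact hkS ((memS _).2 (Or.inr (Or.inr (Or.inl rfl))))
            have hk4' : k ≠ 4 := by
              intro h; rw [h, e4, hx, hy1] at hkS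
              exact hkS ((memS _).2 (Or.inr (Or.inr (Or.inr rfl))))
            have hk5 : k ≤ 5 := by
              by_contra h
              push_neg at h
              have h5 := hmid 5 (by norm_num) h
              rw [e5, hx, hy1] at h5
              rcases (memS _).1 h5 with h' | h' | h' | h'
              · have h'' : σ y₁ = a := σ.injective (h'.trans hx.symm)
                exact absurd ((memS a).2 (Or.inr (Or.inr (Or.inr h''.symm)))) haS
              · exact absurd (σ.injective h') d3.symm
              · have h'' : σ y₁ = σ x₁ := σ.injective (h'.trans hy1.symm)
                exact absurd (σ.injective h'') d2.symm
              · exact absurd (σ.injective h') d6.symm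
            omega
          · -- σ³ a ∉ S ⇒ k = 3
            have hk3 : k ≤ 3 := by
              by_contra h
              push_neg at h
              have h3' := hmid 3 (by norm_num) h
              rw [e3, hx] at h3'
              exact h3 h3'
            omega
        · -- σ a = y₁, σ² a = σ y₁ : symmetric
          have hk2' : k ≠ 2 := by
            intro h; rw [h, e2, hy] at hkS
            exact hkS ((memS _).2 (Or.inr (Or.inr (Or.inr rfl))))
          by_cases h3 : σ (σ y₁) ∈ ({x₁, σ x₁, y₁, σ y₁} : Set E)
          · have hx1 : σ (σ y₁) = x₁ := by
              rcases (memS _).1 h3 with h | h | h | h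
              · exact h
              · exact absurd (σ.injective h) d3.symm
              · have h' : σ y₁ = a := σ.injective (h.trans hy.symm)
                exact absurd ((memS a).2 (Or.inr (Or.inr (Or.inr h'.symm)))) haS
              · exact absurd (σ.injective h) d6.symm
            have hk3' : k ≠ 3 := by
              intro h; rw [h, e3, hy, hx1] at hkS
              exact hkS ((memS _).2 (Or.inl rfl))
            have hk4' : k ≠ 4 := by
              intro h; rw [h, e4, hy, hx1] at hkS
              exact hkS ((memS _).2 (Or.inr (Or.inl rfl)))
            have hk5 : k ≤ 5 := by
              by_contra h
              push_neg at h
              have h5 := hmid 5 (by norm_num) h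
              rw [e5, hy, hx1] at h5
              rcases (memS _).1 h5 with h' | h' | h' | h'
              · have h'' : σ x₁ = σ y₁ := σ.injective (h'.trans hx1.symm)
                exact absurd (σ.injective h'') d2
              · exact absurd (σ.injective h') d1.symm
              · have h'' : σ x₁ = a := σ.injective (h'.trans hy.symm)
                exact absurd ((memS a).2 (Or.inr (Or.inl h''.symm))) haS
              · exact absurd (σ.injective h') d4
            omega
          · have hk3 : k ≤ 3 := by
              by_contra h
              push_neg at h
              have h3' := hmid 3 (by norm_num) h
              rw [e3, hy] at h3'
              exact h3 h3'
            omega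
      · -- σ a ∉ S ⇒ k = 1
        left
        by_contra h
        have hlt : 1 < k := lt_of_le_of_ne hk1 (Ne.symm h)
        have hm := hmid 1 le_rfl hlt
        rw [e1] at hm
        exact h1 hm
    show c (σ' z : E) ≠ c a
    rw [hk]
    rcases hkodd with h | h | h <;> rw [h]
    · rw [e1, hcs]; cases c a <;> simp
    · rw [e3, hcs, hcs, hcs]; cases c a <;> simp
    · rw [e5, hcs, hcs, hcs, hcs, hcs]; cases c a <;> simp
  · show c (τ' z : E) ≠ c (z : E)
    rw [hτ' z]
    exact (hc _).2
end

section
/- Let (E, σ, τ) be an orientable chord diagram and let p, q : E with p ≠ q. Then for at least one of the two pairing patterns (i), (ii), the second-Reidemeister-move insertion at (p, q) with that pattern is an orientable chord diagram. (Among the second Reidemeister moves increasing the number of chords at a given pair of arcs, one of the two possible chord patterns preserves orientability.) -/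
/-- Among the chord-increasing second Reidemeister moves at a given pair of arcs
`(p, q)` of an orientable chord diagram, at least one of the two possible pairing
patterns for the two new chords yields an orientable chord diagram. -/
theorem secondReidemeisterMove_insert_orientable
    {E : Type*} [Fintype E] [DecidableEq E]
    (σ τ : Equiv.Perm E)
    (hτinv : τ * τ = 1) (hτfix : ∀ a : E, τ a ≠ a)
    (hor : Orientable σ τ)
    (p q : E) (hpq : p ≠ q)
    (σ' : Equiv.Perm (E ⊕ Fin 4))
    (hσp : σ' (Sum.inl p) = Sum.inr 0)
    (hσ0 : σ' (Sum.inr 0) = Sum.inr 1)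
    (hσ1 : σ' (Sum.inr 1) = Sum.inl (σ p))
    (hσq : σ' (Sum.inl q) = Sum.inr 2)
    (hσ2 : σ' (Sum.inr 2) = Sum.inr 3)
    (hσ3 : σ' (Sum.inr 3) = Sum.inl (σ q))
    (hσz : ∀ z : E, z ≠ p → z ≠ q → σ' (Sum.inl z) = Sum.inl (σ z))
    (τI τII : Equiv.Perm (E ⊕ Fin 4))
    (hτIz : ∀ z : E, τI (Sum.inl z) = Sum.inl (τ z))
    (hτI02 : τI (Sum.inr 0) = Sum.inr 2) (hτI20 : τI (Sum.inr 2) = Sum.inr 0)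
    (hτI13 : τI (Sum.inr 1) = Sum.inr 3) (hτI31 : τI (Sum.inr 3) = Sum.inr 1)
    (hτIIz : ∀ z : E, τII (Sum.inl z) = Sum.inl (τ z))
    (hτII03 : τII (Sum.inr 0) = Sum.inr 3) (hτII30 : τII (Sum.inr 3) = Sum.inr 0)
    (hτII12 : τII (Sum.inr 1) = Sum.inr 2) (hτII21 : τII (Sum.inr 2) = Sum.inr 1) :
    Orientable σ' τI ∨ Orientable σ' τII := by
  obtain ⟨c, hc⟩ := hor
  set c' : E ⊕ Fin 4 → Bool := Sum.elim c ![!c p, c p, !c q, c q] with hc'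
  have hbase : ∀ x : E ⊕ Fin 4, c' (σ' x) ≠ c' x := by
    rintro (z | i)
    · by_cases hzp : z = p
      · subst hzp; rw [hσp]; simp [c']
      · by_cases hzq : z = q
        · subst hzq; rw [hσq]; simp [c']
        · rw [hσz z hzp hzq]; exact (hc z).1
    · fin_cases i
      · show c' (σ' (Sum.inr 0)) ≠ c' (Sum.inr 0)
        rw [hσ0]; simp [c']
      · show c' (σ' (Sum.inr 1)) ≠ c' (Sum.inr 1)
        rw [hσ1]; simpa [c'] using (hc p).1
      · show c' (σ' (Sum.inr 2)) ≠ c' (Sum.inr 2)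
        rw [hσ2]; simp [c']
      · show c' (σ' (Sum.inr 3)) ≠ c' (Sum.inr 3)
        rw [hσ3]; simpa [c'] using (hc q).1
  by_cases h : c p = c q
  · right
    refine ⟨c', fun x => ⟨hbase x, ?_⟩⟩
    rcases x with z | i
    · rw [hτIIz]; exact (hc z).2
    · fin_cases i
      · show c' (τII (Sum.inr 0)) ≠ c' (Sum.inr 0)
        rw [hτII03]; simp [c', h]
      · show c' (τII (Sum.inr 1)) ≠ c' (Sum.inr 1)
        rw [hτII12]; simp [c', h]
      · show c' (τII (Sum.inr 2)) ≠ c' (Sum.inr 2)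
        rw [hτII21]; simp [c', h]
      · show c' (τII (Sum.inr 3)) ≠ c' (Sum.inr 3)
        rw [hτII30]; simp [c', h]
  · left
    refine ⟨c', fun x => ⟨hbase x, ?_⟩⟩
    rcases x with z | i
    · rw [hτIz]; exact (hc z).2
    · fin_cases i
      · show c' (τI (Sum.inr 0)) ≠ c' (Sum.inr 0)
        rw [hτI02]; simp [c']; exact fun e => h e.symm
      · show c' (τI (Sum.inr 1)) ≠ c' (Sum.inr 1)
        rw [hτI13]; simp [c']; exact fun e => h e.symm
      · show c' (τI (Sum.inr 2)) ≠ c' (Sum.inr 2)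
        rw [hτI20]; simp [c']; exact h
      · show c' (τI (Sum.inr 3)) ≠ c' (Sum.inr 3)
        rw [hτI31]; simp [c']; exact h
end

section
/- Let (E, σ, τ, ε) be a signed chord diagram, p : E, s : Bool, and let (E', σ', τ', ε') be the first-Reidemeister-move insertion at p with sign s on the new chord. Then in ℤ[A, A⁻¹]: if s = true (positive kink) then ⟨E', σ', τ', ε'⟩ = (−A³) · ⟨E, σ, τ, ε⟩, and if s = false (negative kink) then ⟨E', σ', τ', ε'⟩ = (−A⁻³) · ⟨E, σ, τ, ε⟩. (Under the positive, respectively negative, first Reidemeister move the Kauffman bracket of a signed chord diagram is multiplied by −A³, respectively −A⁻³, exactly as in the classical case.) -/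
open LaurentPolynomial

/-- The involution `α` on `E × Bool` matching the two ends of each base arc:
`α (x, false) = (σ x, true)` and `α (x, true) = (σ⁻¹ x, false)`. -/
def alphaPerm {E : Type*} (σ : Equiv.Perm E) : Equiv.Perm (E × Bool) :=
  Function.Involutive.toPerm
    (fun p => if p.2 then (σ⁻¹ p.1, false) else (σ p.1, true))
    (by rintro ⟨x, _ | _⟩ <;> simp)

/-- The involution `μ_m` on `E × Bool` defined by a state `m` of a signed chord
diagram: it sends `(x, true) ↦ (τ x, false)` and `(x, false) ↦ (τ x, true)` when
`m x = ε x`, and `(x, true) ↦ (τ x, true)`, `(x, false) ↦ (τ x, false)` otherwise. -/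
def muPerm {E : Type*} (τ : Equiv.Perm E) (ε m : E → Bool)
    (hτ : ∀ x, τ (τ x) = x) (hε : ∀ x, ε (τ x) = ε x) (hm : ∀ x, m (τ x) = m x) :
    Equiv.Perm (E × Bool) :=
  Function.Involutive.toPerm
    (fun p => (τ p.1, if m p.1 = ε p.1 then !p.2 else p.2))
    (by rintro ⟨x, b⟩; by_cases h : m x = ε x <;> simp [h, hτ, hε, hm])

/-- `|m|`: the number of orbits on `E × Bool` of the subgroup of `Equiv.Perm (E × Bool)`
generated by `α` and `μ_m`, i.e. the number of components of the smoothing of the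
signed chord diagram along the state `m`. -/
noncomputable def numComponents {E : Type*} [Fintype E] [DecidableEq E]
    (σ τ : Equiv.Perm E) (ε m : E → Bool)
    (hτ : ∀ x, τ (τ x) = x) (hε : ∀ x, ε (τ x) = ε x) (hm : ∀ x, m (τ x) = m x) : ℕ :=
  Nat.card (MulAction.orbitRel.Quotient
    (Subgroup.closure {alphaPerm σ, muPerm τ ε m hτ hε hm} : Subgroup (Equiv.Perm (E × Bool)))
    (E × Bool))

/-- `a(m)`: the number of chords (orbits of `τ`) on which the `τ`-invariant map `m`
takes the value `true` (each such chord contributes its two endpoints). -/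
def aCount {E : Type*} [Fintype E] [DecidableEq E] (m : E → Bool) : ℕ :=
  (Finset.univ.filter fun x => m x = true).card / 2

/-- `b(m)`: the number of chords (orbits of `τ`) on which the `τ`-invariant map `m`
takes the value `false`. -/
def bCount {E : Type*} [Fintype E] [DecidableEq E] (m : E → Bool) : ℕ :=
  (Finset.univ.filter fun x => m x = false).card / 2

/-- The Kauffman bracket of a signed chord diagram `(E, σ, τ, ε)`:
`⟨E, σ, τ, ε⟩ = Σ_m A^(a(m) − b(m)) · (−A² − A⁻²)^|m|` in `ℤ[A, A⁻¹]`,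
the sum running over all states `m`. -/
noncomputable def kauffman {E : Type*} [Fintype E] [DecidableEq E]
    (σ τ : Equiv.Perm E) (ε : E → Bool)
    (hτ : ∀ x, τ (τ x) = x) (hε : ∀ x, ε (τ x) = ε x) : LaurentPolynomial ℤ :=
  ∑ m : {m : E → Bool // ∀ x, m (τ x) = m x},
    T ((aCount m.1 : ℤ) - (bCount m.1 : ℤ)) *
      (-(T 2) - T (-2)) ^ (numComponents σ τ ε m.1 hτ hε m.2)

/-!
Every state of the diagram with the kink is a state `m` of the original diagram together with
a marker `c` on the new chord, and `a - b` changes by `±1` according to `c`. Smoothing the kink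
either splits off a small circle (when `c` agrees with the sign `s`) or just reroutes the arc
through the new endpoints, so `|(m, c)| = |m| + [c = s]`. Summing over `c` gives the factor
`A (-A² - A⁻²) + A⁻¹ = -A³` for a positive kink and `A + A⁻¹ (-A² - A⁻²) = -A⁻³` for a
negative one.
The components are compared by including the old smoothing into the new one and collapsing the
four new endpoint sides onto `(p, false)`; the split-off circle is the one class this misses.
-/

open Equiv Sum Relation

namespace Equiv.Perm

variable {X : Type*} {S : Set (Perm X)} {r : X → X → Prop}

theorem eqvGen_apply_of_mem_closure (hS : ∀ g ∈ S, ∀ x, EqvGen r x (g x)) {g : Perm X}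
    (hg : g ∈ Subgroup.closure S) (x : X) : EqvGen r x (g x) := by
  induction hg using Subgroup.closure_induction generalizing x with
  | mem g hg => exact hS g hg x
  | one => exact EqvGen.refl x
  | mul g k _ _ ihg ihk => exact (ihk x).trans _ _ _ (ihg (k x))
  | inv g _ ih => simpa using (ih (g⁻¹ x)).symm

def orbitRelQuotientClosureEquivQuot (hS : ∀ g ∈ S, ∀ x, EqvGen r x (g x))
    (hr : ∀ x y, r x y → ∃ g ∈ S, g x = y) :
    MulAction.orbitRel.Quotient (Subgroup.closure S) X ≃ Quot r where
  toFun := Quotient.lift (Quot.mk r) fun x y hxy => by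
    obtain ⟨⟨g, hg⟩, rfl⟩ := MulAction.orbitRel_apply.mp hxy
    exact (Quot.eqvGen_sound (eqvGen_apply_of_mem_closure hS hg y)).symm
  invFun := Quot.lift (Quotient.mk _) fun x y hxy => by
    obtain ⟨g, hg, rfl⟩ := hr x y hxy
    exact Quotient.sound ((MulAction.orbitRel _ X).symm'
      (MulAction.orbitRel_apply.mpr ⟨⟨g, Subgroup.subset_closure hg⟩, rfl⟩))
  left_inv q := by induction q using Quotient.ind; rfl
  right_inv q := by induction q using Quot.ind; rfl

end Equiv.Perm

section KinkInsertion

variable {E : Type*}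

@[simp]
theorem alphaPerm_false (σ : Perm E) (x : E) : alphaPerm σ (x, false) = (σ x, true) := rfl

@[simp]
theorem alphaPerm_true (σ : Perm E) (x : E) : alphaPerm σ (x, true) = (σ⁻¹ x, false) := rfl

/-- One edge per base arc and one per chord end; it generates the same equivalence relation
as `alphaPerm σ` and `muPerm τ ε m`, without referring to the proofs these need. -/
def smoothingRel (σ τ : Perm E) (ε m : E → Bool) (x y : E × Bool) : Prop :=
  (x.2 = false ∧ y = (σ x.1, true)) ∨ y = (τ x.1, if m x.1 = ε x.1 then !x.2 else x.2)

section smoothingRel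

variable (σ τ : Perm E) (ε m : E → Bool)

theorem numComponents_eq_card_quot_smoothingRel [Fintype E] [DecidableEq E]
    (hτ : ∀ x, τ (τ x) = x) (hε : ∀ x, ε (τ x) = ε x) (hm : ∀ x, m (τ x) = m x) :
    numComponents σ τ ε m hτ hε hm = Nat.card (Quot (smoothingRel σ τ ε m)) := by
  refine Nat.card_congr (Perm.orbitRelQuotientClosureEquivQuot ?_ ?_)
  · rintro g (rfl | rfl) ⟨x, _ | _⟩
    · exact EqvGen.rel _ _ (Or.inl ⟨rfl, rfl⟩)
    · exact EqvGen.symm _ _ (EqvGen.rel _ _ (Or.inl ⟨rfl, by simp⟩))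
    all_goals exact EqvGen.rel _ _ (Or.inr rfl)
  · rintro ⟨x, b⟩ y (⟨rfl, rfl⟩ | rfl)
    · exact ⟨alphaPerm σ, by simp, rfl⟩
    · exact ⟨muPerm τ ε m hτ hε hm, by simp, rfl⟩

theorem mk_smoothingRel_arc (x : E) :
    Quot.mk (smoothingRel σ τ ε m) (x, false) = Quot.mk _ (σ x, true) :=
  Quot.sound (Or.inl ⟨rfl, rfl⟩)

theorem mk_smoothingRel_chord (x : E) (b : Bool) :
    Quot.mk (smoothingRel σ τ ε m) (x, b) = Quot.mk _ (τ x, if m x = ε x then !b else b) :=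
  Quot.sound (Or.inr rfl)

end smoothingRel

structure IsKinkInsertion (σ τ : Perm E) (p : E) (σ' τ' : Perm (E ⊕ Fin 2)) : Prop where
  σ_inl_self : σ' (inl p) = inr 0
  σ_inr_zero : σ' (inr 0) = inr 1
  σ_inr_one : σ' (inr 1) = inl (σ p)
  σ_inl_of_ne : ∀ z, z ≠ p → σ' (inl z) = inl (σ z)
  τ_inr_zero : τ' (inr 0) = inr 1
  τ_inr_one : τ' (inr 1) = inr 0
  τ_inl : ∀ z, τ' (inl z) = inl (τ z)

namespace IsKinkInsertion

def retract (p : E) : (E ⊕ Fin 2) × Bool → E × Bool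
  | (inl x, b) => (x, b)
  | (inr _, _) => (p, false)

def onSplitCircle : (E ⊕ Fin 2) × Bool → Prop
  | (inl _, _) => False
  | (inr i, b) => (i = 0 ↔ b = false)

variable {σ τ : Perm E} {p : E} {σ' τ' : Perm (E ⊕ Fin 2)}

section components

variable (ε m : E → Bool) (s c : Bool)

local notation "R" => smoothingRel σ τ ε m
local notation "R'" => smoothingRel σ' τ' (Sum.elim ε fun _ => s) (Sum.elim m fun _ => c)

theorem mk_inl_self_false (h : IsKinkInsertion σ τ p σ' τ') :
    Quot.mk R' (inl p, false) = Quot.mk R' (inr 0, true) := by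
  rw [mk_smoothingRel_arc, h.σ_inl_self]

theorem mk_inr_zero_false (h : IsKinkInsertion σ τ p σ' τ') :
    Quot.mk R' (inr 0, false) = Quot.mk R' (inr 1, true) := by
  rw [mk_smoothingRel_arc, h.σ_inr_zero]

theorem mk_inr_one_false (h : IsKinkInsertion σ τ p σ' τ') :
    Quot.mk R' (inr 1, false) = Quot.mk R' (inl (σ p), true) := by
  rw [mk_smoothingRel_arc, h.σ_inr_one]

theorem mk_inr_zero (h : IsKinkInsertion σ τ p σ' τ') (b : Bool) :
    Quot.mk R' (inr 0, b) = Quot.mk R' (inr 1, if c = s then !b else b) := by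
  rw [mk_smoothingRel_chord, h.τ_inr_zero]
  rfl

theorem mk_inl_arc (h : IsKinkInsertion σ τ p σ' τ') (x : E) :
    Quot.mk R' (inl x, false) = Quot.mk R' (inl (σ x), true) := by
  by_cases hx : x = p
  · subst hx
    rw [h.mk_inl_self_false, h.mk_inr_zero, ← h.mk_inr_one_false]
    by_cases hcs : c = s
    · simp [hcs]
    · simp only [hcs, if_false]
      rw [← h.mk_inr_zero_false, h.mk_inr_zero, if_neg hcs]
  · rw [mk_smoothingRel_arc, h.σ_inl_of_ne x hx]

theorem mk_inl_eq_of_smoothingRel (h : IsKinkInsertion σ τ p σ' τ') {x y : E × Bool}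
    (hxy : R x y) : Quot.mk R' (inl x.1, x.2) = Quot.mk R' (inl y.1, y.2) := by
  obtain ⟨x, b⟩ := x
  rcases hxy with ⟨rfl, rfl⟩ | rfl
  · exact h.mk_inl_arc ε m s c x
  · rw [mk_smoothingRel_chord, h.τ_inl]
    rfl

def inclusion (h : IsKinkInsertion σ τ p σ' τ') : Quot R → Quot R' :=
  Quot.lift (fun x => Quot.mk R' (inl x.1, x.2)) fun _ _ => h.mk_inl_eq_of_smoothingRel ε m s c

theorem mk_retract_eq_of_smoothingRel (h : IsKinkInsertion σ τ p σ' τ')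
    {x y : (E ⊕ Fin 2) × Bool} (hxy : R' x y) :
    Quot.mk R (retract p x) = Quot.mk R (retract p y) := by
  obtain ⟨u | i, b⟩ := x
  · rcases hxy with ⟨rfl, rfl⟩ | rfl
    · by_cases hu : u = p
      · subst hu
        rw [h.σ_inl_self]
        rfl
      · rw [h.σ_inl_of_ne u hu]
        exact mk_smoothingRel_arc σ τ ε m u
    · rw [h.τ_inl]
      exact mk_smoothingRel_chord σ τ ε m u b
  · obtain rfl | rfl : i = 0 ∨ i = 1 := by omega
    all_goals rcases hxy with ⟨rfl, rfl⟩ | rfl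
    · rw [h.σ_inr_zero]
      rfl
    · rw [h.τ_inr_zero]
      rfl
    · rw [h.σ_inr_one]
      exact mk_smoothingRel_arc σ τ ε m p
    · rw [h.τ_inr_one]
      rfl

def retraction (h : IsKinkInsertion σ τ p σ' τ') : Quot R' → Quot R :=
  Quot.lift (fun y => Quot.mk R (retract p y)) fun _ _ => h.mk_retract_eq_of_smoothingRel ε m s c

theorem retraction_inclusion (h : IsKinkInsertion σ τ p σ' τ') :
    Function.LeftInverse (h.retraction ε m s c) (h.inclusion ε m s c) := by
  rintro ⟨x⟩
  rfl

theorem mk_inr_of_ne (h : IsKinkInsertion σ τ p σ' τ') (hcs : c ≠ s) (i : Fin 2) (b : Bool) :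
    Quot.mk R' (inr i, b) = Quot.mk R' (inl p, false) := by
  have h0 : Quot.mk R' (inr 0, true) = Quot.mk R' (inr 0, false) := by
    rw [h.mk_inr_zero, if_neg hcs, h.mk_inr_zero_false]
  have h1 : Quot.mk R' (inr 1, b) = Quot.mk R' (inr 0, b) := by
    rw [h.mk_inr_zero, if_neg hcs]
  rw [h.mk_inl_self_false]
  obtain rfl | rfl : i = 0 ∨ i = 1 := by omega
  all_goals cases b <;> simp only [h0, h1]

theorem inclusion_retraction_of_ne (h : IsKinkInsertion σ τ p σ' τ') (hcs : c ≠ s) :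
    Function.RightInverse (h.retraction ε m s c) (h.inclusion ε m s c) := by
  rintro ⟨x | i, b⟩
  · rfl
  · exact (h.mk_inr_of_ne ε m s c hcs i b).symm

theorem onSplitCircle_iff_of_smoothingRel (h : IsKinkInsertion σ τ p σ' τ') (hcs : c = s)
    {x y : (E ⊕ Fin 2) × Bool} (hxy : R' x y) : onSplitCircle x ↔ onSplitCircle y := by
  obtain ⟨u | i, b⟩ := x
  · rcases hxy with ⟨rfl, rfl⟩ | rfl
    · by_cases hu : u = p
      · simp [hu, h.σ_inl_self, onSplitCircle]
      · simp [h.σ_inl_of_ne u hu, onSplitCircle]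
    · simp [h.τ_inl, onSplitCircle]
  · obtain rfl | rfl : i = 0 ∨ i = 1 := by omega
    all_goals rcases hxy with ⟨rfl, rfl⟩ | rfl
    all_goals simp [hcs, h.σ_inr_zero, h.σ_inr_one, h.τ_inr_zero, h.τ_inr_one, onSplitCircle]

theorem range_inclusion_of_eq (h : IsKinkInsertion σ τ p σ' τ') (hcs : c = s) :
    Set.range (h.inclusion ε m s c) = {Quot.mk R' (inr 0, false)}ᶜ := by
  ext ⟨y⟩
  constructor
  · rintro ⟨⟨x⟩, hx⟩ hy
    have hcircle := congrArg (Quot.lift onSplitCircle fun _ _ hxy =>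
      propext (h.onSplitCircle_iff_of_smoothingRel ε m s c hcs hxy)) (hx.trans hy)
    have hnew : onSplitCircle ((inr 0, false) : (E ⊕ Fin 2) × Bool) := by simp [onSplitCircle]
    exact cast hcircle.symm hnew
  · intro hy
    obtain ⟨x | i, b⟩ := y
    · exact ⟨Quot.mk R (x, b), rfl⟩
    obtain rfl | rfl : i = 0 ∨ i = 1 := by omega
    all_goals cases b
    · exact absurd rfl hy
    · exact ⟨Quot.mk R (p, false), h.mk_inl_self_false ε m s c⟩
    · exact ⟨Quot.mk R (σ p, true), (h.mk_inr_one_false ε m s c).symm⟩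
    · exact absurd (h.mk_inr_zero_false ε m s c).symm hy

theorem card_quot_smoothingRel [Finite E] (h : IsKinkInsertion σ τ p σ' τ') :
    Nat.card (Quot R') = Nat.card (Quot R) + if c = s then 1 else 0 := by
  classical
  split_ifs with hcs
  · have hinj := (h.retraction_inclusion ε m s c).injective
    rw [← Nat.card_congr (Equiv.optionSubtypeNe (Quot.mk R' (inr 0, false))), Finite.card_option,
      Nat.card_congr ((Equiv.ofInjective _ hinj).trans
        (Equiv.setCongr (h.range_inclusion_of_eq ε m s c hcs)))]
    rfl
  · exact (Nat.card_congr ⟨_, _, h.retraction_inclusion ε m s c,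
      h.inclusion_retraction_of_ne ε m s c hcs⟩).symm

end components

def stateEquiv (h : IsKinkInsertion σ τ p σ' τ') :
    {m : E → Bool // ∀ x, m (τ x) = m x} × Bool ≃
      {m' : E ⊕ Fin 2 → Bool // ∀ x, m' (τ' x) = m' x} where
  toFun q := ⟨Sum.elim q.1.1 fun _ => q.2, by
    rintro (x | i)
    · simp [h.τ_inl, q.1.2]
    · obtain rfl | rfl : i = 0 ∨ i = 1 := by omega
      · simp [h.τ_inr_zero]
      · simp [h.τ_inr_one]⟩
  invFun m' := (⟨m'.1 ∘ inl, fun x => by simpa [h.τ_inl] using m'.2 (inl x)⟩, m'.1 (inr 0))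
  left_inv _ := rfl
  right_inv m' := by
    refine Subtype.ext (funext ?_)
    rintro (x | i)
    · rfl
    · obtain rfl | rfl : i = 0 ∨ i = 1 := by omega
      · rfl
      · simpa [h.τ_inr_zero] using (m'.2 (inr 0)).symm

@[simp]
theorem stateEquiv_apply_coe (h : IsKinkInsertion σ τ p σ' τ')
    (q : {m : E → Bool // ∀ x, m (τ x) = m x} × Bool) :
    (h.stateEquiv q).1 = Sum.elim q.1.1 fun _ => q.2 :=
  rfl

end IsKinkInsertion

theorem card_filter_sumElim_eq [Fintype E] (m : E → Bool) (c b : Bool) :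
    (Finset.univ.filter fun x => Sum.elim m (fun _ : Fin 2 => c) x = b).card =
      (Finset.univ.filter fun x => m x = b).card + if c = b then 2 else 0 := by
  rw [Finset.card_filter, Fintype.sum_sum_type, Finset.card_filter]
  congr 1
  split_ifs with hcb <;> simp [hcb]

theorem aCount_sub_bCount_sumElim [Fintype E] [DecidableEq E] (m : E → Bool) (c : Bool) :
    (aCount (Sum.elim m fun _ : Fin 2 => c) : ℤ) - bCount (Sum.elim m fun _ : Fin 2 => c) =
      (aCount m : ℤ) - bCount m + if c then 1 else -1 := by
  unfold aCount bCount
  rw [card_filter_sumElim_eq, card_filter_sumElim_eq]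
  cases c <;> simp <;> omega

theorem sum_kink_weights (s : Bool) :
    ∑ c : Bool, T (if c then 1 else -1) * (-(T 2) - T (-2) : LaurentPolynomial ℤ) ^
      (if c = s then 1 else 0) = -T (if s then 3 else -3) := by
  cases s <;> simp only [Fintype.sum_bool, if_true, if_false, Bool.true_eq_false,
    Bool.false_eq_true, pow_one, pow_zero, mul_one, mul_sub, mul_neg, ← T_add] <;> norm_num
  abel

theorem IsKinkInsertion.kauffman_eq [Fintype E] [DecidableEq E] {σ τ : Perm E} {p : E}
    {σ' τ' : Perm (E ⊕ Fin 2)} (h : IsKinkInsertion σ τ p σ' τ') (ε : E → Bool) (s : Bool)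
    (hτ : ∀ x, τ (τ x) = x) (hε : ∀ x, ε (τ x) = ε x) (hτ' : ∀ x, τ' (τ' x) = x)
    (hε' : ∀ x, Sum.elim ε (fun _ => s) (τ' x) = Sum.elim ε (fun _ => s) x) :
    kauffman σ' τ' (Sum.elim ε fun _ => s) hτ' hε' =
      -T (if s then 3 else -3) * kauffman σ τ ε hτ hε := by
  unfold kauffman
  rw [← h.stateEquiv.sum_comp, Fintype.sum_prod_type, Finset.mul_sum]
  refine Finset.sum_congr rfl fun m _ => ?_
  simp only [numComponents_eq_card_quot_smoothingRel, stateEquiv_apply_coe,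
    aCount_sub_bCount_sumElim, h.card_quot_smoothingRel, T_add, pow_add]
  rw [← sum_kink_weights s, Finset.sum_mul]
  refine Finset.sum_congr rfl fun c _ => ?_
  ring

end KinkInsertion

theorem kauffman_firstReidemeisterMove_general
    {E : Type*} [Fintype E] [DecidableEq E]
    (σ τ : Equiv.Perm E) (ε : E → Bool)
    (hτ : ∀ x : E, τ (τ x) = x)
    (hε : ∀ x : E, ε (τ x) = ε x)
    (p : E) (s : Bool)
    (σ' τ' : Equiv.Perm (E ⊕ Fin 2)) (ε' : E ⊕ Fin 2 → Bool)
    (hσp : σ' (Sum.inl p) = Sum.inr 0)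
    (hσ0 : σ' (Sum.inr 0) = Sum.inr 1)
    (hσ1 : σ' (Sum.inr 1) = Sum.inl (σ p))
    (hσz : ∀ z : E, z ≠ p → σ' (Sum.inl z) = Sum.inl (σ z))
    (hτ0 : τ' (Sum.inr 0) = Sum.inr 1)
    (hτ1 : τ' (Sum.inr 1) = Sum.inr 0)
    (hτz : ∀ z : E, τ' (Sum.inl z) = Sum.inl (τ z))
    (hτ' : ∀ x : E ⊕ Fin 2, τ' (τ' x) = x)
    (hε'z : ∀ z : E, ε' (Sum.inl z) = ε z)
    (hε'new : ∀ i : Fin 2, ε' (Sum.inr i) = s)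
    (hε' : ∀ x : E ⊕ Fin 2, ε' (τ' x) = ε' x) :
    (s = true →
      kauffman σ' τ' ε' hτ' hε' = (-(T 3)) * kauffman σ τ ε hτ hε) ∧
    (s = false →
      kauffman σ' τ' ε' hτ' hε' = (-(T (-3))) * kauffman σ τ ε hτ hε) := by
  obtain rfl : ε' = Sum.elim ε fun _ => s := by
    funext x
    rcases x with z | i
    · exact hε'z z
    · exact hε'new i
  have h : IsKinkInsertion σ τ p σ' τ' := ⟨hσp, hσ0, hσ1, hσz, hτ0, hτ1, hτz⟩
  rw [h.kauffman_eq ε s hτ hε hτ' hε']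
  constructor <;> rintro rfl <;> rfl

/-- Under a first-Reidemeister-move insertion with a positive (resp. negative) kink,
the Kauffman bracket of a signed chord diagram is multiplied by `−A³` (resp. `−A⁻³`),
exactly as in the classical case. -/
theorem kauffman_firstReidemeisterMove
    {E : Type*} [Fintype E] [DecidableEq E]
    (σ τ : Equiv.Perm E) (ε : E → Bool)
    (hτ : ∀ x : E, τ (τ x) = x) (hτfix : ∀ x : E, τ x ≠ x)
    (hε : ∀ x : E, ε (τ x) = ε x)
    (p : E) (s : Bool)
    (σ' τ' : Equiv.Perm (E ⊕ Fin 2)) (ε' : E ⊕ Fin 2 → Bool)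
    (hσp : σ' (Sum.inl p) = Sum.inr 0)
    (hσ0 : σ' (Sum.inr 0) = Sum.inr 1)
    (hσ1 : σ' (Sum.inr 1) = Sum.inl (σ p))
    (hσz : ∀ z : E, z ≠ p → σ' (Sum.inl z) = Sum.inl (σ z))
    (hτ0 : τ' (Sum.inr 0) = Sum.inr 1)
    (hτ1 : τ' (Sum.inr 1) = Sum.inr 0)
    (hτz : ∀ z : E, τ' (Sum.inl z) = Sum.inl (τ z))
    (hτ' : ∀ x : E ⊕ Fin 2, τ' (τ' x) = x) (hτ'fix : ∀ x : E ⊕ Fin 2, τ' x ≠ x)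
    (hε'z : ∀ z : E, ε' (Sum.inl z) = ε z)
    (hε'new : ∀ i : Fin 2, ε' (Sum.inr i) = s)
    (hε' : ∀ x : E ⊕ Fin 2, ε' (τ' x) = ε' x) :
    (s = true →
      kauffman σ' τ' ε' hτ' hε' = (-(T 3)) * kauffman σ τ ε hτ hε) ∧
    (s = false →
      kauffman σ' τ' ε' hτ' hε' = (-(T (-3))) * kauffman σ τ ε hτ hε) :=
  kauffman_firstReidemeisterMove_general σ τ ε hτ hε p s σ' τ' ε' hσp hσ0 hσ1 hσz hτ0 hτ1 hτz hτ'
    hε'z hε'new hε'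
end

section
/- Let n : ℕ and let F : (Fin n → Bool) → ℕ satisfy: for every s : Fin n → Bool and every i : Fin n, either F (Function.update s i (¬ s i)) = F s + 1 or F s = F (Function.update s i (¬ s i)) + 1 (flipping a single coordinate changes F by exactly one). Define P := Σ over all s : Fin n → Bool of A^{2·(card {i | s i = true}) − n} · (−A² − A^{−2})^{F s} in the Laurent polynomial ring ℤ[A, A⁻¹]. Then for any integers k and l at which P has nonzero coefficient, k ≡ l (mod 4). (This is the abstract form of the claim that all exponents in the Kauffman state sum of a classical link diagram are congruent modulo 4, since for a classical diagram the number of components of a smoothing changes by exactly one whenever a single marker is changed.) -/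
/-!
Grade `ℤ[A, A⁻¹]` by exponents modulo 4. Each `A^e` is homogeneous of degree `e mod 4`, and
so is `-A² - A⁻²`, of degree `2`, because `-2 ≡ 2 (mod 4)`; hence the summand of a state `s`
is homogeneous of degree `2·#{i | s i} - n + 2·F s`. Flipping one marker changes both
`#{i | s i}` and `F s` by one, so `#{i | s i} + F s` has the same parity for every state and
all summands, hence `P`, lie in a single degree.
-/

open LaurentPolynomial

open Finset Function AddMonoidAlgebra

theorem apply_eq_of_forall_apply_update_eq {ι β γ : Type*} [DecidableEq ι] [Finite ι]
    {g : (ι → β) → γ} (hg : ∀ s i b, g (update s i b) = g s) (s t : ι → β) : g s = g t := by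
  have : Fintype ι := Fintype.ofFinite ι
  have key : ∀ S : Finset ι, g (S.piecewise t s) = g s := by
    intro S
    induction S using Finset.induction_on with
    | empty => rw [piecewise_empty]
    | insert a S _ ih => rw [piecewise_insert, hg, ih]
  rw [← key univ, piecewise_univ]

theorem ZMod.natCast_eq_add_one_of_eq_add_one_or_eq_add_one {a b : ℕ}
    (h : a = b + 1 ∨ b = a + 1) : (a : ZMod 2) = b + 1 := by
  rcases h with rfl | rfl
  · push_cast; rfl
  · push_cast; rw [add_assoc, CharTwo.add_self_eq_zero, add_zero]

theorem ZMod.two_mul_natCast_eq_of_natCast_eq {a b : ℕ} (h : (a : ZMod 2) = b) :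
    (2 * a : ZMod 4) = 2 * b := by
  have := ((ZMod.natCast_eq_natCast_iff a b 2).1 h).mul_left' 2
  exact_mod_cast (ZMod.natCast_eq_natCast_iff _ _ 4).2 this

theorem card_filter_update_not {ι : Type*} [Fintype ι] [DecidableEq ι] (s : ι → Bool) (i : ι) :
    #{j | update s i (!s i) j} = #{j | s j} + 1 ∨
      #{j | s j} = #{j | update s i (!s i) j} + 1 := by
  cases hi : s i
  · left
    have : univ.filter (update s i true · = true) = insert i (univ.filter (s · = true)) := by
      ext j; by_cases hj : j = i <;> simp [hj, hi, update_apply]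
    rw [Bool.not_false, this, card_insert_of_notMem (by simp [hi])]
  · right
    have : univ.filter (update s i false · = true) = (univ.filter (s · = true)).erase i := by
      ext j; by_cases hj : j = i <;> simp [hj, update_apply]
    rw [Bool.not_true, this, card_erase_add_one (by simp [hi])]

theorem natCast_add_card_filter_eq_of_flip {ι : Type*} [Fintype ι] [DecidableEq ι]
    {F : (ι → Bool) → ℕ}
    (hF : ∀ s i, F (update s i (!s i)) = F s + 1 ∨ F s = F (update s i (!s i)) + 1)
    (s t : ι → Bool) : (F s + #{i | s i} : ZMod 2) = F t + #{i | t i} := by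
  refine apply_eq_of_forall_apply_update_eq (g := fun s => (F s + #{i | s i} : ZMod 2))
    (fun s i b => ?_) s t
  obtain rfl | rfl : b = s i ∨ b = !s i := by cases b <;> cases s i <;> simp
  · rw [update_eq_self]
  · rw [ZMod.natCast_eq_add_one_of_eq_add_one_or_eq_add_one (hF s i),
      ZMod.natCast_eq_add_one_of_eq_add_one_or_eq_add_one (card_filter_update_not s i)]
    linear_combination CharTwo.add_self_eq_zero (1 : ZMod 2)

theorem AddMonoidAlgebra.apply_eq_of_mem_gradeBy {M ι R : Type*} [CommSemiring R] {f : M → ι}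
    {i : ι} {p : R[M]} (hp : p ∈ gradeBy R f i) {m : M} (hm : p.coeff m ≠ 0) : f m = i :=
  hp m (Finsupp.mem_support_iff.2 hm)

/-- Abstract form of the congruence-mod-4 property of the Kauffman state sum of a
classical link diagram: if `F : (Fin n → Bool) → ℕ` changes by exactly one whenever a
single coordinate of its argument is flipped (as the number of components of a
smoothing does when one marker is changed), then all exponents of nonzero monomials
of the state sum `P = Σ_s A^(2·#{i | s i} − n) · (−A² − A⁻²)^(F s)` are congruent
modulo 4. -/
theorem stateSum_exponents_mod_four
    (n : ℕ) (F : (Fin n → Bool) → ℕ)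
    (hF : ∀ (s : Fin n → Bool) (i : Fin n),
      F (Function.update s i (!(s i))) = F s + 1 ∨
        F s = F (Function.update s i (!(s i))) + 1)
    (P : LaurentPolynomial ℤ)
    (hP : P = ∑ s : Fin n → Bool,
      T (2 * (((Finset.univ.filter fun i => s i = true).card : ℤ)) - (n : ℤ)) *
        (-(T 2) - T (-2)) ^ F s)
    (k l : ℤ) (hk : P.coeff k ≠ 0) (hl : P.coeff l ≠ 0) :
    k ≡ l [ZMOD 4] := by
  let f : ℤ →+ ZMod 4 := Int.castAddHom _
  have hT : ∀ m : ℤ, (T m : LaurentPolynomial ℤ) ∈ gradeBy ℤ f m :=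
    fun m => single_mem_gradeBy f m 1
  have hloop : (-(T 2) - T (-2) : LaurentPolynomial ℤ) ∈ gradeBy ℤ f 2 :=
    sub_mem (neg_mem (hT 2)) (hT (-2))
  have hstate (s : Fin n → Bool) :
      (2 * F s + 2 * #{i | s i} : ZMod 4) = 2 * F (fun _ => false) := by
    have := ZMod.two_mul_natCast_eq_of_natCast_eq (a := F s + #{i | s i})
      (b := F fun _ => false) (by simpa using natCast_add_card_filter_eq_of_flip hF s fun _ => false)
    simpa [mul_add] using this
  have hPgrade : P ∈ gradeBy ℤ f (2 * F (fun _ => false) - n) := by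
    rw [hP]
    refine sum_mem fun s _ => ?_
    convert SetLike.mul_mem_graded (hT _) (SetLike.pow_mem_graded (F s) hloop) using 2
    simp only [← hstate s, Int.cast_sub, Int.cast_mul, Int.cast_ofNat, Int.cast_natCast,
      nsmul_eq_mul]
    ring
  exact (ZMod.intCast_eq_intCast_iff _ _ 4).1 <|
    (apply_eq_of_mem_gradeBy hPgrade hk).trans (apply_eq_of_mem_gradeBy hPgrade hl).symm
end

section
/- Let (E, σ, τ, ε) be a signed chord diagram whose underlying chord diagram (E, σ, τ) admits an orientation. Let m be a state and let m' be the state obtained from m by changing the marker on a single chord {x, τ x} (i.e., m' agrees with m except m' x = ¬ m x and m' (τ x) = ¬ m (τ x)). Then the numbers of components of the two smoothings differ by exactly one: |m'| = |m| + 1 or |m| = |m'| + 1. (For an orientable chord diagram every change of a single marker is an orientation-preserving Morse modification of the smoothed curve, hence changes the number of components by one.) -/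
open LaurentPolynomial

/-!
Write `ρ_m = α * μ_m`. Since `α` and `μ_m` are involutions, the orbit of `p` under `⟨α, μ_m⟩` is
the union of the `ρ_m`-cycles of `p` and of `α p`. An orientation `c` makes the colour `c ∘ fst`
flip under `α` and under `μ_m`, so it is constant on `ρ_m`-cycles and these two cycles are always
distinct: `ρ_m` has exactly `2 |m|` cycles.

Changing the marker on the chord `{x, τ x}` multiplies `ρ_m` by the transpositions of
`(x, ⊤), (x, ⊥)` and of `(τ x, ⊤), (τ x, ⊥)`. Multiplying by a transposition splits the cycle
through both points it moves, or merges the two cycles through them. The second pair has the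
other colour, so the first transposition does not touch its cycles, and conjugation by `μ_m`
shows that the first pair shares a cycle iff the second does. Both transpositions therefore split
or both merge, and the number of cycles changes by exactly two.
-/

open Equiv Equiv.Perm

section Setoid
variable {S : Type*}

def Setoid.glue (s : Setoid S) (u v : S) : Setoid S where
  r p q := s p q ∨ (s p u ∧ s v q) ∨ (s p v ∧ s u q)
  iseqv := by
    have trans : ∀ {a b c}, s a b → s b c → s a c := s.trans
    have symm : ∀ {a b}, s a b → s b a := s.symm
    exact ⟨fun p => Or.inl (s.refl p), by grind, by grind⟩

theorem Setoid.le_glue (s : Setoid S) (u v : S) : s ≤ s.glue u v := fun _ _ => Or.inl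

theorem Setoid.glue_rel_left_right (s : Setoid S) (u v : S) : s.glue u v u v :=
  Or.inr (Or.inl ⟨s.refl u, s.refl v⟩)

theorem Setoid.card_quotient_glue [Finite S] {s : Setoid S} {u v : S} (huv : ¬ s u v) :
    Nat.card (Quotient (s.glue u v)) + 1 = Nat.card (Quotient s) := by
  classical
  let F : Quotient s → Quotient (s.glue u v) := Quotient.map id (s.le_glue u v)
  have hF : Function.Bijective fun z : {z : Quotient s // z ≠ ⟦v⟧} => F z := by
    refine ⟨?_, ?_⟩
    · rintro ⟨z, hz⟩ ⟨w, hw⟩ h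
      induction z using Quotient.ind with | _ p => ?_
      induction w using Quotient.ind with | _ q => ?_
      have hp : ¬ s p v := fun h => hz (Quotient.sound h)
      have hq : ¬ s q v := fun h => hw (Quotient.sound h)
      rcases Quotient.exact h with h | ⟨-, h⟩ | ⟨h, -⟩
      · exact Subtype.ext (Quotient.sound h)
      · exact absurd (s.symm h) hq
      · exact absurd h hp
    · intro w
      induction w using Quotient.ind with | _ p => ?_
      by_cases hp : s p v
      · refine ⟨⟨⟦u⟧, fun h => huv (Quotient.exact h)⟩, Quotient.sound ?_⟩
        exact Or.inr (Or.inl ⟨s.refl u, s.symm hp⟩)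
      · exact ⟨⟨⟦p⟧, fun h => hp (Quotient.exact h)⟩, rfl⟩
  classical
  rw [← Nat.card_eq_of_bijective _ hF, ← Finite.card_option,
    Nat.card_congr (optionSubtypeNe _)]


theorem Setoid.card_quotient_eq_two_mul [Finite S] {s t : Setoid S} (f : S → S) (D : S → Bool)
    (hst : ∀ p q, t p q ↔ s p q ∨ s p (f q)) (hD : s ≤ Setoid.ker D) (hf : ∀ p, D (f p) = !D p) :
    Nat.card (Quotient s) = 2 * Nat.card (Quotient t) := by
  have hle : s ≤ t := fun p q h => (hst p q).2 (Or.inl h)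
  let F : Quotient s → Quotient t × Bool :=
    Quotient.lift (fun p => (⟦p⟧, D p)) fun p q h => by
      simp only [Prod.mk.injEq]
      exact ⟨Quotient.sound (hle h), hD h⟩
  have hF : Function.Bijective F := by
    refine ⟨?_, ?_⟩
    · intro z w h
      induction z using Quotient.ind with | _ p => ?_
      induction w using Quotient.ind with | _ q => ?_
      obtain ⟨h₁, h₂⟩ := Prod.mk.inj h
      rcases (hst p q).1 (Quotient.exact h₁) with h | h
      · exact Quotient.sound h
      · have h₃ : D p = !D q := (hD h).trans (hf q)
        simp [h₂] at h₃
    · rintro ⟨w, b⟩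
      induction w using Quotient.ind with | _ q => ?_
      by_cases hq : D q = b
      · exact ⟨⟦q⟧, by simp [F, hq]⟩
      · refine ⟨⟦f q⟧, ?_⟩
        simp only [F, Quotient.lift_mk, Prod.mk.injEq, hf]
        exact ⟨Quotient.sound ((hst _ _).2 (Or.inr (s.refl _))),
          by simpa [Bool.eq_not_iff] using hq⟩
  rw [Nat.card_eq_of_bijective F hF, Nat.card_prod, Nat.card_eq_fintype_card (α := Bool),
    Fintype.card_bool, mul_comm]

theorem Setoid.rel_swap_apply [DecidableEq S] {r : Setoid S} {u v : S} (h : r u v)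
    (z : S) : r (swap u v z) z := by
  rw [swap_apply_def]
  split_ifs with hu hv
  · exact hu ▸ r.symm h
  · exact hv ▸ h
  · exact r.refl z

end Setoid

theorem MulAction.orbitRel_closure_le {G X : Type*} [Group G] [MulAction G X] {s : Set G}
    {r : Setoid X} (h : ∀ g ∈ s, ∀ x, r (g • x) x) : orbitRel (Subgroup.closure s) X ≤ r := by
  have key : ∀ g ∈ Subgroup.closure s, ∀ x, r (g • x) x := by
    intro g hg
    induction hg using Subgroup.closure_induction with
    | mem g hg => exact h g hg
    | one => exact fun x => by rw [one_smul]
    | mul g g' _ _ ih ih' => exact fun x => by rw [mul_smul]; exact r.trans (ih _) (ih' x)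
    | inv g _ ih => exact fun x => by simpa using r.symm (ih (g⁻¹ • x))
  rintro x y ⟨⟨g, hg⟩, rfl⟩
  exact key g hg y

namespace Equiv.Perm

variable {S : Type*}

-- Unlike `cycleType`, this counts fixed points as cycles.
noncomputable def numCycles (π : Perm S) : ℕ := Nat.card (Quotient (SameCycle.setoid π))

theorem sameCycle_setoid_le_iff [Finite S] {π : Perm S} {r : Setoid S} :
    SameCycle.setoid π ≤ r ↔ ∀ z, r (π z) z := by
  refine ⟨fun h z => h (sameCycle_apply_left.2 (SameCycle.refl π z)), fun h p q hpq => ?_⟩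
  obtain ⟨i, rfl⟩ := SameCycle.exists_nat_pow_eq hpq
  clear hpq
  refine r.symm ?_
  induction i with
  | zero => exact r.refl p
  | succ i ih => rw [pow_succ', mul_apply]; exact r.trans (h _) ih

theorem sameCycle_apply_apply_iff_of_conj_eq_inv {π g : Perm S} (h : g * π * g⁻¹ = π⁻¹)
    {z w : S} : π.SameCycle (g z) (g w) ↔ π.SameCycle z w := by
  rw [← sameCycle_inv, ← h, sameCycle_conj]
  simp

theorem sameCycle_mul_apply_left_iff {a b : Perm S} (ha : Function.Involutive a)
    (hb : Function.Involutive b) {z w : S} :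
    (a * b).SameCycle (a z) (a w) ↔ (a * b).SameCycle z w :=
  sameCycle_apply_apply_iff_of_conj_eq_inv <| by
    ext z
    simp [ha.symm_eq_self_of_involutive, hb.symm_eq_self_of_involutive, ha _]

theorem sameCycle_mul_apply_right_iff {a b : Perm S} (ha : Function.Involutive a)
    (hb : Function.Involutive b) {z w : S} :
    (a * b).SameCycle (b z) (b w) ↔ (a * b).SameCycle z w :=
  sameCycle_apply_apply_iff_of_conj_eq_inv <| by
    ext z
    simp [ha.symm_eq_self_of_involutive, hb.symm_eq_self_of_involutive, hb _]

section Swap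

variable [DecidableEq S] {π : Perm S} {u v : S}

theorem mul_swap_pow_apply_of_forall_lt {z : S} {k : ℕ}
    (h : ∀ j < k, (π ^ j) z ≠ u ∧ (π ^ j) z ≠ v) : ((π * swap u v) ^ k) z = (π ^ k) z := by
  induction k with
  | zero => rfl
  | succ k ih =>
    obtain ⟨hu, hv⟩ := h k k.lt_succ_self
    rw [pow_succ', mul_apply, ih fun j hj => h j (by omega), mul_apply,
      swap_apply_of_ne_of_ne hu hv, pow_succ', mul_apply]

theorem mul_swap_pow_succ_apply_swap {w : S} {k : ℕ}
    (h : ∀ j, 0 < j → j ≤ k → (π ^ j) w ≠ u ∧ (π ^ j) w ≠ v) :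
    ((π * swap u v) ^ (k + 1)) (swap u v w) = (π ^ (k + 1)) w := by
  rw [pow_succ, mul_apply, mul_apply, swap_apply_self, mul_swap_pow_apply_of_forall_lt,
    ← mul_apply, ← pow_succ]
  intro j hj
  rw [← mul_apply, ← pow_succ]
  exact h (j + 1) j.succ_pos hj

theorem sameCycle_mul_swap_iff [Finite S] {p q : S} (hu : ¬ π.SameCycle p u)
    (hv : ¬ π.SameCycle p v) : (π * swap u v).SameCycle p q ↔ π.SameCycle p q := by
  have hpow : ∀ k, ((π * swap u v) ^ k) p = (π ^ k) p := fun k =>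
    mul_swap_pow_apply_of_forall_lt fun j _ =>
      ⟨fun h => hu ⟨j, by simpa⟩, fun h => hv ⟨j, by simpa⟩⟩
  constructor <;> intro h <;> obtain ⟨k, rfl⟩ := h.exists_nat_pow_eq
  · rw [hpow]
    exact sameCycle_pow_right.2 (SameCycle.refl _ _)
  · rw [← hpow]
    exact sameCycle_pow_right.2 (SameCycle.refl _ _)

theorem not_sameCycle_mul_swap [Finite S] (huv : u ≠ v) (h : π.SameCycle u v) :
    ¬ (π * swap u v).SameCycle u v := by
  classical
  have hex : ∃ n, 0 < n ∧ (π ^ n) v = u := by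
    obtain ⟨n, hn⟩ := h.symm.exists_nat_pow_eq
    exact ⟨n, Nat.pos_of_ne_zero (by rintro rfl; exact huv hn.symm), hn⟩
  obtain ⟨hn, hnu⟩ := Nat.find_spec hex
  set n := Nat.find hex
  have hmin : ∀ j, 0 < j → j < n → (π ^ j) v ≠ u ∧ (π ^ j) v ≠ v := fun j hj hjn =>
    ⟨fun h => Nat.find_min hex hjn ⟨hj, h⟩, fun h => Nat.find_min hex (by omega : n - j < n)
      ⟨by omega, by rw [← h, ← mul_apply, ← pow_add, Nat.sub_add_cancel hjn.le, hnu]⟩⟩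
  -- the cycle of `u` under `π * swap u v` is `π v, π² v, …, πⁿ v = u`, which avoids `v`
  have hwalk : ∀ k < n, ((π * swap u v) ^ (k + 1)) u = (π ^ (k + 1)) v := fun k hk => by
    simpa using mul_swap_pow_succ_apply_swap (u := u) (w := v) fun j hj hjk => hmin j hj (by omega)
  have hper : Function.IsPeriodicPt (π * swap u v) n u := by
    have := hwalk (n - 1) (by omega)
    rwa [Nat.sub_add_cancel hn, hnu] at this
  rintro hsc
  obtain ⟨i, hi⟩ := hsc.exists_nat_pow_eq
  rw [coe_pow, ← hper.iterate_mod_apply, ← coe_pow] at hi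
  rcases Nat.eq_zero_or_pos (i % n) with h0 | hpos
  · rw [h0] at hi
    exact huv hi
  · obtain ⟨k, hk⟩ := Nat.exists_eq_add_one_of_ne_zero hpos.ne'
    have hkn : k + 1 < n := hk ▸ Nat.mod_lt i hn
    rw [hk, hwalk k (by omega)] at hi
    exact (hmin (k + 1) k.succ_pos hkn).2 hi

theorem sameCycle_mul_swap_of_not_sameCycle [Finite S] (h : ¬ π.SameCycle u v) :
    (π * swap u v).SameCycle u v := by
  classical
  have hex : ∃ n, 0 < n ∧ (π ^ n) u = u :=
    ⟨orderOf π, orderOf_pos π, by rw [pow_orderOf_eq_one]; rfl⟩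
  obtain ⟨hn, hnu⟩ := Nat.find_spec hex
  set n := Nat.find hex
  -- `π * swap u v` sends `v` to `π u`, and then follows the `π`-cycle of `u`, which avoids `v`
  have hloop := mul_swap_pow_succ_apply_swap (π := π) (u := u) (v := v) (w := u) (k := n - 1)
    fun j hj hjk => ⟨fun h' => Nat.find_min hex (by omega) ⟨hj, h'⟩, fun h' => h ⟨j, by simpa⟩⟩
  rw [swap_apply_left, Nat.sub_add_cancel hn, hnu] at hloop
  have hsc : (π * swap u v).SameCycle (((π * swap u v) ^ n) v) v :=
    sameCycle_pow_left.2 (SameCycle.refl _ v)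
  rwa [hloop] at hsc

theorem sameCycle_setoid_eq_glue [Finite S] (h : π.SameCycle u v) :
    SameCycle.setoid π = (SameCycle.setoid (π * swap u v)).glue u v := by
  set π' := π * swap u v
  apply le_antisymm
  · refine sameCycle_setoid_le_iff.2 fun z => ?_
    have hz : π z = π' (swap u v z) := by simp [π']
    rw [hz]
    exact ((SameCycle.setoid π').glue u v).trans
      (Setoid.le_glue _ u v (sameCycle_apply_left.2 (SameCycle.refl π' _)))
      (Setoid.rel_swap_apply (Setoid.glue_rel_left_right _ u v) z)
  · have hle : SameCycle.setoid π' ≤ SameCycle.setoid π :=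
      sameCycle_setoid_le_iff.2 fun z =>
        sameCycle_apply_left.2 (Setoid.rel_swap_apply (r := SameCycle.setoid π) h z)
    rintro p q (hpq | ⟨hpu, hvq⟩ | ⟨hpv, huq⟩)
    · exact hle hpq
    · exact ((hle hpu).trans h).trans (hle hvq)
    · exact ((hle hpv).trans h.symm).trans (hle huq)

theorem numCycles_mul_swap_of_sameCycle [Finite S] (huv : u ≠ v) (h : π.SameCycle u v) :
    numCycles (π * swap u v) = numCycles π + 1 := by
  rw [numCycles, numCycles, sameCycle_setoid_eq_glue h,
    Setoid.card_quotient_glue (not_sameCycle_mul_swap huv h)]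

theorem numCycles_mul_swap_of_not_sameCycle [Finite S] (huv : u ≠ v) (h : ¬ π.SameCycle u v) :
    numCycles π = numCycles (π * swap u v) + 1 := by
  simpa using numCycles_mul_swap_of_sameCycle huv (sameCycle_mul_swap_of_not_sameCycle h)

theorem numCycles_mul_swap_mul_swap [Finite S] {u' v' : S} (huv : u ≠ v) (hu'v' : u' ≠ v')
    (hu : ¬ π.SameCycle u' u) (hv : ¬ π.SameCycle u' v)
    (h : π.SameCycle u v ↔ π.SameCycle u' v') :
    numCycles (π * swap u v * swap u' v') = numCycles π + 2 ∨
      numCycles π = numCycles (π * swap u v * swap u' v') + 2 := by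
  have h' : (π * swap u v).SameCycle u' v' ↔ π.SameCycle u v :=
    (sameCycle_mul_swap_iff hu hv).trans h.symm
  by_cases hsc : π.SameCycle u v
  · have h₁ := numCycles_mul_swap_of_sameCycle huv hsc
    have h₂ := numCycles_mul_swap_of_sameCycle hu'v' (h'.2 hsc)
    omega
  · have h₁ := numCycles_mul_swap_of_not_sameCycle huv hsc
    have h₂ := numCycles_mul_swap_of_not_sameCycle hu'v' (mt h'.1 hsc)
    omega

end Swap

section Involutions

variable {a b : Perm S}

theorem orbitRel_closure_pair_iff_of_involutive (ha : Function.Involutive a)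
    (hb : Function.Involutive b) {p q : S} : MulAction.orbitRel (Subgroup.closure {a, b}) S p q ↔
      (a * b).SameCycle p q ∨ (a * b).SameCycle p (a q) := by
  have hconj {z w : S} := sameCycle_mul_apply_left_iff ha hb (z := z) (w := w)
  let r : Setoid S :=
    { r := fun p q => (a * b).SameCycle p q ∨ (a * b).SameCycle p (a q)
      iseqv := by
        refine ⟨fun p => Or.inl (SameCycle.refl _ p), ?_, ?_⟩
        · rintro p q (h | h)
          · exact Or.inl h.symm
          · exact Or.inr (by simpa [ha q] using hconj.2 h.symm)
        · rintro p q z (h | h) (h' | h')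
          · exact Or.inl (h.trans h')
          · exact Or.inr (h.trans h')
          · exact Or.inr (h.trans (hconj.2 h'))
          · exact Or.inl (h.trans (by simpa [ha z] using hconj.2 h')) }
  have ha_mem : a ∈ Subgroup.closure {a, b} := Subgroup.subset_closure (by simp)
  have hρ_mem : a * b ∈ Subgroup.closure {a, b} :=
    mul_mem ha_mem (Subgroup.subset_closure (by simp))
  constructor
  · refine fun hpq => MulAction.orbitRel_closure_le (r := r) ?_ hpq
    rintro g (hg | hg) z <;> rw [hg]
    · exact Or.inr (SameCycle.refl _ _)
    · refine Or.inr ?_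
      simpa [hb z] using sameCycle_apply_right.2 (SameCycle.refl (a * b) (b z))
  · rintro (h | h) <;> obtain ⟨i, hi⟩ := h.symm
    · exact ⟨⟨_, zpow_mem hρ_mem i⟩, hi⟩
    · exact ⟨⟨_, mul_mem (zpow_mem hρ_mem i) ha_mem⟩, by simpa [mul_smul] using hi⟩

theorem sameCycle_setoid_mul_le_ker [Finite S] {D : S → Bool} (hDa : ∀ z, D (a z) = !D z)
    (hDb : ∀ z, D (b z) = !D z) : SameCycle.setoid (a * b) ≤ Setoid.ker D :=
  sameCycle_setoid_le_iff.2 fun z => by simp [Setoid.ker_def, hDa, hDb]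

theorem numCycles_mul_eq_two_mul_card_orbits [Finite S] (ha : Function.Involutive a)
    (hb : Function.Involutive b) {D : S → Bool} (hDa : ∀ z, D (a z) = !D z)
    (hDb : ∀ z, D (b z) = !D z) :
    numCycles (a * b) = 2 * Nat.card (MulAction.orbitRel.Quotient (Subgroup.closure {a, b}) S) :=
  Setoid.card_quotient_eq_two_mul a D (fun _ _ => orbitRel_closure_pair_iff_of_involutive ha hb)
    (sameCycle_setoid_mul_le_ker hDa hDb) hDa

end Involutions

end Equiv.Perm

section ChordDiagram

variable {E : Type*}

theorem muPerm_apply {τ : Perm E} {ε m : E → Bool} (hτ : ∀ x, τ (τ x) = x)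
    (hε : ∀ x, ε (τ x) = ε x) (hm : ∀ x, m (τ x) = m x) (p : E × Bool) :
    muPerm τ ε m hτ hε hm p = (τ p.1, if m p.1 = ε p.1 then !p.2 else p.2) := rfl

theorem alphaPerm_involutive (σ : Perm E) : Function.Involutive (alphaPerm σ) :=
  Function.Involutive.toPerm_involutive _

theorem muPerm_involutive {τ : Perm E} {ε m : E → Bool} (hτ : ∀ x, τ (τ x) = x)
    (hε : ∀ x, ε (τ x) = ε x) (hm : ∀ x, m (τ x) = m x) :
    Function.Involutive (muPerm τ ε m hτ hε hm) :=
  Function.Involutive.toPerm_involutive _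

theorem IsOrientation.apply_alphaPerm {σ τ : Perm E} {c : E → Bool} (hc : IsOrientation σ τ c)
    (p : E × Bool) : c (alphaPerm σ p).1 = !c p.1 := by
  obtain ⟨y, _ | _⟩ := p
  · exact Bool.eq_not_iff.2 (hc y).1
  · have h := (hc (σ⁻¹ y)).1
    rw [coe_inv, apply_symm_apply] at h
    exact Bool.eq_not_iff.2 (Ne.symm h)

theorem IsOrientation.apply_muPerm {σ τ : Perm E} {c : E → Bool} (hc : IsOrientation σ τ c)
    {ε m : E → Bool} (hτ : ∀ x, τ (τ x) = x) (hε : ∀ x, ε (τ x) = ε x) (hm : ∀ x, m (τ x) = m x)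
    (p : E × Bool) : c (muPerm τ ε m hτ hε hm p).1 = !c p.1 :=
  Bool.eq_not_iff.2 (hc p.1).2

theorem numCycles_alphaPerm_mul_muPerm [Fintype E] [DecidableEq E] {σ τ : Perm E} {c : E → Bool}
    (hc : IsOrientation σ τ c) {ε m : E → Bool} (hτ : ∀ x, τ (τ x) = x)
    (hε : ∀ x, ε (τ x) = ε x) (hm : ∀ x, m (τ x) = m x) :
    numCycles (alphaPerm σ * muPerm τ ε m hτ hε hm) = 2 * numComponents σ τ ε m hτ hε hm :=
  numCycles_mul_eq_two_mul_card_orbits (alphaPerm_involutive σ) (muPerm_involutive hτ hε hm)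
    (D := fun p => c p.1) hc.apply_alphaPerm (hc.apply_muPerm hτ hε hm)

theorem muPerm_eq_mul_swap_mul_swap [DecidableEq E] {τ : Perm E} {ε m m' : E → Bool}
    (hτ : ∀ x, τ (τ x) = x) (hε : ∀ x, ε (τ x) = ε x) (hm : ∀ x, m (τ x) = m x)
    (hm' : ∀ x, m' (τ x) = m' x) {x : E} (hxτ : τ x ≠ x) (hx : m' x = !m x)
    (hother : ∀ y, y ≠ x → y ≠ τ x → m' y = m y) :
    muPerm τ ε m' hτ hε hm' =
      muPerm τ ε m hτ hε hm * swap (x, true) (x, false) * swap (τ x, true) (τ x, false) := by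
  have hτx : m' (τ x) = !m (τ x) := by rw [hm', hm, hx]
  ext ⟨y, b⟩ : 1
  rcases eq_or_ne y x with rfl | hyx
  · cases b <;> simp [muPerm_apply, swap_apply_def, hxτ.symm, hx] <;>
      cases m y <;> cases ε y <;> simp
  rcases eq_or_ne y (τ x) with rfl | hyτ
  · cases b <;> simp [muPerm_apply, swap_apply_def, hxτ, hτx] <;>
      cases m (τ x) <;> cases ε (τ x) <;> simp
  · simp [muPerm_apply, swap_apply_of_ne_of_ne, hyx, hyτ, hother y hyx hyτ]

theorem sameCycle_alphaPerm_mul_muPerm_iff [DecidableEq E] {σ τ : Perm E} {ε m : E → Bool}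
    (hτ : ∀ x, τ (τ x) = x) (hε : ∀ x, ε (τ x) = ε x) (hm : ∀ x, m (τ x) = m x) (x : E) :
    (alphaPerm σ * muPerm τ ε m hτ hε hm).SameCycle (x, true) (x, false) ↔
      (alphaPerm σ * muPerm τ ε m hτ hε hm).SameCycle (τ x, true) (τ x, false) := by
  rw [← sameCycle_mul_apply_right_iff (alphaPerm_involutive σ) (muPerm_involutive hτ hε hm)]
  simp only [muPerm_apply]
  split_ifs
  · exact sameCycle_comm
  · rfl

end ChordDiagram

theorem numComponents_changeMarker_of_orientable_general
    {E : Type*} [Fintype E] [DecidableEq E]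
    (σ τ : Equiv.Perm E) (ε : E → Bool)
    (hτ : ∀ y : E, τ (τ y) = y)
    (hε : ∀ y : E, ε (τ y) = ε y)
    (hor : Orientable σ τ)
    (m m' : E → Bool)
    (hm : ∀ y : E, m (τ y) = m y) (hm' : ∀ y : E, m' (τ y) = m' y)
    (x : E)
    (hx : m' x = !(m x))
    (hother : ∀ y : E, y ≠ x → y ≠ τ x → m' y = m y) :
    numComponents σ τ ε m' hτ hε hm' = numComponents σ τ ε m hτ hε hm + 1 ∨
      numComponents σ τ ε m hτ hε hm = numComponents σ τ ε m' hτ hε hm' + 1 := by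
  obtain ⟨c, hc⟩ := hor
  set ρ := alphaPerm σ * muPerm τ ε m hτ hε hm
  have hxτ : τ x ≠ x := fun h => (hc x).2 (congrArg c h)
  have hcolour (b b' : Bool) : ¬ ρ.SameCycle (τ x, b) (x, b') := fun h =>
    (hc x).2 (sameCycle_setoid_mul_le_ker (D := fun p : E × Bool => c p.1)
      hc.apply_alphaPerm (hc.apply_muPerm hτ hε hm) h)
  have hρ' : alphaPerm σ * muPerm τ ε m' hτ hε hm' =
      ρ * swap (x, true) (x, false) * swap (τ x, true) (τ x, false) := by
    rw [muPerm_eq_mul_swap_mul_swap hτ hε hm hm' hxτ hx hother]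
    simp only [ρ, mul_assoc]
  have key := numCycles_mul_swap_mul_swap (by simp) (by simp) (hcolour true true)
    (hcolour true false) (sameCycle_alphaPerm_mul_muPerm_iff hτ hε hm x)
  rw [← hρ', numCycles_alphaPerm_mul_muPerm hc, numCycles_alphaPerm_mul_muPerm hc] at key
  omega

/-- For a signed chord diagram whose underlying chord diagram is orientable, changing
the marker of a state on a single chord `{x, τ x}` changes the number of components of
the smoothing by exactly one. -/
theorem numComponents_changeMarker_of_orientable
    {E : Type*} [Fintype E] [DecidableEq E]
    (σ τ : Equiv.Perm E) (ε : E → Bool)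
    (hτ : ∀ y : E, τ (τ y) = y) (hτfix : ∀ y : E, τ y ≠ y)
    (hε : ∀ y : E, ε (τ y) = ε y)
    (hor : Orientable σ τ)
    (m m' : E → Bool)
    (hm : ∀ y : E, m (τ y) = m y) (hm' : ∀ y : E, m' (τ y) = m' y)
    (x : E)
    (hx : m' x = !(m x)) (hτx : m' (τ x) = !(m (τ x)))
    (hother : ∀ y : E, y ≠ x → y ≠ τ x → m' y = m y) :
    numComponents σ τ ε m' hτ hε hm' = numComponents σ τ ε m hτ hε hm + 1 ∨
      numComponents σ τ ε m hτ hε hm = numComponents σ τ ε m' hτ hε hm' + 1 :=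
  numComponents_changeMarker_of_orientable_general σ τ ε hτ hε hor m m' hm hm' x hx hother
end

section
/- Let α be a finite type, π : Equiv.Perm α, and a, b : α with a ≠ b. For a permutation g of α let N(g) denote the number of orbits of the action of the cyclic subgroup generated by g on α (i.e., Fintype.card of the quotient of α by the orbit equivalence relation of Subgroup.zpowers g). Then N (Equiv.swap a b * π) = N π + 1 or N π = N (Equiv.swap a b * π) + 1. (This is the combinatorial form of the fact that an orientation-preserving Morse modification of index 1 on a closed oriented 1-manifold changes the number of connected components by exactly one.) -/
/-- `N g`: the number of orbits (cycles, including fixed points) of the action on `α`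
of the cyclic subgroup generated by a permutation `g`, i.e. the cardinality of the
quotient of `α` by the orbit equivalence relation of `Subgroup.zpowers g`. -/
noncomputable def cycleCount {α : Type*} [Fintype α] (g : Equiv.Perm α) : ℕ :=
  @Fintype.card (MulAction.orbitRel.Quotient (Subgroup.zpowers g) α) (Fintype.ofFinite _)

section Aux
set_option linter.unusedSectionVars false
set_option linter.unusedVariables false
set_option linter.unnecessarySimpa false

open Equiv Equiv.Perm

variable {α : Type*} [DecidableEq α]

/-- one step: if `a` and `b` are in the same cycle of `π`, then `(swap a b * π) x`
is in the same `π`-cycle as `x`. -/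
lemma step_sameCycle (π : Perm α) {a b : α} (hab : π.SameCycle a b) (x : α) :
    π.SameCycle x ((Equiv.swap a b * π) x) := by
  have hx : π.SameCycle x (π x) := ⟨1, by simp⟩
  rcases eq_or_ne (π x) a with h | h
  · have : (Equiv.swap a b * π) x = b := by simp [Perm.mul_apply, h]
    rw [this]
    exact (hx.trans (h ▸ hab : π.SameCycle (π x) b))
  rcases eq_or_ne (π x) b with h' | h'
  · have : (Equiv.swap a b * π) x = a := by simp [Perm.mul_apply, h']
    rw [this]
    exact (hx.trans (h' ▸ hab.symm : π.SameCycle (π x) a))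
  · have : (Equiv.swap a b * π) x = π x := by
      simp [Perm.mul_apply, Equiv.swap_apply_of_ne_of_ne h h']
    rw [this]; exact hx

lemma sameCycle_of_swap_mul [Finite α] (π : Perm α) {a b : α} (hab : π.SameCycle a b)
    {x y : α} (h : (Equiv.swap a b * π).SameCycle x y) : π.SameCycle x y := by
  obtain ⟨n, -, rfl⟩ := h.exists_pow_eq'
  clear h
  induction n with
  | zero => exact ⟨0, by simp⟩
  | succ n ih =>
    have : ((Equiv.swap a b * π) ^ (n + 1)) x
        = (Equiv.swap a b * π) (((Equiv.swap a b * π) ^ n) x) := by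
      rw [pow_succ', Perm.mul_apply]
    rw [this]
    exact ih.trans (step_sameCycle π hab _)

/-- key pow computation: as long as the `π`-orbit of `b` stays away from `a` and `b`,
`(swap a b * π)` agrees with `π` on the orbit of `b`. -/
lemma pow_swap_mul_eq (π : Perm α) (a b : α) (k : ℕ)
    (hk : ∀ j, 1 ≤ j → j ≤ k → (π ^ j) b ≠ a ∧ (π ^ j) b ≠ b) :
    ((Equiv.swap a b * π) ^ k) b = (π ^ k) b := by
  induction k with
  | zero => simp
  | succ n ih =>
    have ih' := ih (fun j h1 h2 => hk j h1 (h2.trans (Nat.le_succ n)))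
    have h1 : ((Equiv.swap a b * π) ^ (n + 1)) b
        = (Equiv.swap a b) (π ((π ^ n) b)) := by
      rw [pow_succ', Perm.mul_apply, ih', Perm.mul_apply]
    have h2 : π ((π ^ n) b) = (π ^ (n + 1)) b := by
      rw [pow_succ', Perm.mul_apply]
    obtain ⟨ha, hb⟩ := hk (n + 1) (Nat.succ_le_succ (Nat.zero_le n)) le_rfl
    rw [h1, h2, Equiv.swap_apply_of_ne_of_ne ha hb]

/-- If `a` and `b` are in different cycles of `π`, then they are in the same cycle
of `swap a b * π`. -/
lemma sameCycle_swap_mul_of_not [Finite α] (π : Perm α) {a b : α}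
    (h : ¬ π.SameCycle a b) : (Equiv.swap a b * π).SameCycle b a := by
  have hex : ∃ n, 0 < n ∧ (π ^ n) b = b :=
    ⟨orderOf π, orderOf_pos π, by rw [pow_orderOf_eq_one]; rfl⟩
  classical
  let m := Nat.find hex
  obtain ⟨hm0, hmb⟩ : 0 < m ∧ (π ^ m) b = b := Nat.find_spec hex
  have hlt : ∀ j, 1 ≤ j → j < m → (π ^ j) b ≠ b := by
    intro j h1 h2 hj
    exact Nat.find_min hex h2 ⟨h1, hj⟩
  have hna : ∀ j : ℕ, (π ^ j) b ≠ a := by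
    intro j hj
    exact h (SameCycle.symm ⟨(j : ℤ), by rw [zpow_natCast]; exact hj⟩)
  have key : ((Equiv.swap a b * π) ^ (m - 1)) b = (π ^ (m - 1)) b :=
    pow_swap_mul_eq π a b (m - 1) (fun j h1 h2 =>
      ⟨hna j, hlt j h1 (lt_of_le_of_lt h2 (Nat.sub_lt hm0 one_pos))⟩)
  refine ⟨(m : ℤ), ?_⟩
  rw [zpow_natCast]
  have hm1 : m = (m - 1) + 1 := (Nat.succ_pred_eq_of_pos hm0).symm
  rw [hm1, pow_succ', Perm.mul_apply, key, Perm.mul_apply]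
  have : π ((π ^ (m - 1)) b) = (π ^ m) b := by
    conv_rhs => rw [hm1]
    rw [pow_succ', Perm.mul_apply]
  rw [this, hmb, Equiv.swap_apply_right]

/-- If `a` and `b` are in the same cycle of `π`, then they are in different cycles
of `swap a b * π`. -/
lemma not_sameCycle_swap_mul_of [Finite α] (π : Perm α) {a b : α} (hab : a ≠ b)
    (h : π.SameCycle a b) : ¬ (Equiv.swap a b * π).SameCycle a b := by
  classical
  have hex : ∃ n, 0 < n ∧ (π ^ n) b = a := by
    obtain ⟨n, -, hn⟩ := h.symm.exists_pow_eq'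
    refine ⟨n, ?_, hn⟩
    rcases Nat.eq_zero_or_pos n with rfl | hpos
    · simp at hn; exact absurd hn.symm hab
    · exact hpos
  let m := Nat.find hex
  obtain ⟨hm0, hma⟩ : 0 < m ∧ (π ^ m) b = a := Nat.find_spec hex
  have hmin : ∀ j, 0 < j → j < m → (π ^ j) b ≠ a := by
    intro j h1 h2 hj
    exact Nat.find_min hex h2 ⟨h1, hj⟩
  -- on the way from `b` to `a`, the orbit avoids `b` as well
  have hnb : ∀ j, 0 < j → j < m → (π ^ j) b ≠ b := by
    intro j h1 h2 hj
    have : (π ^ (m - j)) b = a := by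
      have : (π ^ (m - j)) ((π ^ j) b) = (π ^ m) b := by
        rw [← Perm.mul_apply, ← pow_add, Nat.sub_add_cancel h2.le]
      rw [hj] at this; rw [this, hma]
    exact hmin (m - j) (Nat.sub_pos_of_lt h2) (Nat.sub_lt_of_pos_le h1 h2.le) this
  have key : ∀ k, k < m → ((Equiv.swap a b * π) ^ k) b = (π ^ k) b := fun k hk =>
    pow_swap_mul_eq π a b k (fun j h1 h2 =>
      ⟨hmin j h1 (lt_of_le_of_lt h2 hk), hnb j h1 (lt_of_le_of_lt h2 hk)⟩)
  -- `(swap a b * π) ^ m` fixes `b`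
  have hper : ((Equiv.swap a b * π) ^ m) b = b := by
    have hm1 : m = (m - 1) + 1 := (Nat.succ_pred_eq_of_pos hm0).symm
    rw [hm1, pow_succ', Perm.mul_apply, key (m - 1) (by omega), Perm.mul_apply]
    have : π ((π ^ (m - 1)) b) = (π ^ m) b := by
      conv_rhs => rw [hm1]
      rw [pow_succ', Perm.mul_apply]
    rw [this, hma, Equiv.swap_apply_left]
  -- hence the whole `(swap a b * π)`-orbit of `b` avoids `a`
  have horb : ∀ n : ℕ, ((Equiv.swap a b * π) ^ n) b ≠ a := by
    have hmul : ∀ q : ℕ, ((Equiv.swap a b * π) ^ (m * q)) b = b := by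
      intro q
      induction q with
      | zero => simp
      | succ q ih =>
        rw [Nat.mul_succ, pow_add, Perm.mul_apply, hper, ih]
    intro n
    have : ((Equiv.swap a b * π) ^ n) b = (π ^ (n % m)) b := by
      conv_lhs => rw [← Nat.div_add_mod n m, Nat.add_comm]
      rw [pow_add, Perm.mul_apply, hmul (n / m), key _ (Nat.mod_lt _ hm0)]
    rw [this]
    rcases Nat.eq_zero_or_pos (n % m) with hz | hpos
    · rw [hz]; simpa using hab.symm
    · exact hmin _ hpos (Nat.mod_lt _ hm0)
  intro hc
  obtain ⟨n, -, hn⟩ := hc.symm.exists_pow_eq'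
  exact horb n hn

/-- Trichotomy: when `a` and `b` lie in different cycles of `π`, any two points in the
same cycle of `swap a b * π` are either in the same `π`-cycle, or lie (one each) in the
`π`-cycles of `a` and `b`. -/
lemma sameCycle_swap_mul_trichotomy [Finite α] (π : Perm α) {a b : α}
    (h : ¬ π.SameCycle a b) {x y : α} (hxy : (Equiv.swap a b * π).SameCycle x y) :
    π.SameCycle x y ∨ (π.SameCycle x a ∧ π.SameCycle y b) ∨
      (π.SameCycle x b ∧ π.SameCycle y a) := by
  obtain ⟨n, -, rfl⟩ := hxy.exists_pow_eq'
  clear hxy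
  induction n with
  | zero => exact Or.inl ⟨0, by simp⟩
  | succ n ih =>
    set z := ((Equiv.swap a b * π) ^ n) x with hz
    have hstep : ((Equiv.swap a b * π) ^ (n + 1)) x = Equiv.swap a b (π z) := by
      rw [pow_succ', Perm.mul_apply, Perm.mul_apply]
    have hzz : π.SameCycle z (π z) := ⟨1, by simp⟩
    rcases eq_or_ne (π z) a with hpa | hpa
    · -- next point is `b`
      have hb' : ((Equiv.swap a b * π) ^ (n + 1)) x = b := by
        rw [hstep, hpa, Equiv.swap_apply_left]
      have hza : π.SameCycle z a := hpa ▸ hzz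
      rw [hb']
      rcases ih with h1 | ⟨h2a, h2b⟩ | ⟨h3a, h3b⟩
      · exact Or.inr (Or.inl ⟨h1.trans hza, SameCycle.refl _ _⟩)
      · exact absurd (h2b.symm.trans hza) (fun hc => h hc.symm)
      · exact Or.inl (h3a.trans (SameCycle.refl _ _))
    rcases eq_or_ne (π z) b with hpb | hpb
    · have ha' : ((Equiv.swap a b * π) ^ (n + 1)) x = a := by
        rw [hstep, hpb, Equiv.swap_apply_right]
      have hzb : π.SameCycle z b := hpb ▸ hzz
      rw [ha']
      rcases ih with h1 | ⟨h2a, h2b⟩ | ⟨h3a, h3b⟩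
      · exact Or.inr (Or.inr ⟨h1.trans hzb, SameCycle.refl _ _⟩)
      · exact Or.inl h2a
      · exact absurd (h3b.symm.trans hzb) h
    · have heq : ((Equiv.swap a b * π) ^ (n + 1)) x = π z := by
        rw [hstep, Equiv.swap_apply_of_ne_of_ne hpa hpb]
      rw [heq]
      rcases ih with h1 | ⟨h2a, h2b⟩ | ⟨h3a, h3b⟩
      · exact Or.inl (h1.trans hzz)
      · exact Or.inr (Or.inl ⟨h2a, (hzz.symm.trans h2b :)⟩)
      · exact Or.inr (Or.inr ⟨h3a, (hzz.symm.trans h3b :)⟩)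

lemma orbitRel_mk_eq_iff (g : Perm α) (x y : α) :
    (Quotient.mk'' x : MulAction.orbitRel.Quotient (Subgroup.zpowers g) α) = Quotient.mk'' y
      ↔ g.SameCycle x y := by
  rw [Quotient.eq'']
  constructor
  · intro hr
    rw [MulAction.orbitRel_apply, MulAction.mem_orbit_iff] at hr
    obtain ⟨⟨u, hu⟩, huy⟩ := hr
    rw [Subgroup.mem_zpowers_iff] at hu
    obtain ⟨i, rfl⟩ := hu
    exact SameCycle.symm ⟨i, huy⟩
  · rintro ⟨i, hi⟩
    rw [MulAction.orbitRel_apply, MulAction.mem_orbit_iff]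
    refine ⟨⟨g ^ (-i), Subgroup.mem_zpowers_iff.2 ⟨-i, rfl⟩⟩, ?_⟩
    show (g ^ (-i)) y = x
    rw [← hi, zpow_neg]
    simp

lemma cycleCount_merge {α : Type*} [Fintype α] [DecidableEq α] (π : Perm α) {a b : α}
    (hab : a ≠ b) (h : ¬ π.SameCycle a b) :
    cycleCount π = cycleCount (Equiv.swap a b * π) + 1 := by
  classical
  set σ := Equiv.swap a b * π with hσ
  have hσab : σ.SameCycle a b := (sameCycle_swap_mul_of_not π h).symm
  have hswapσ : Equiv.swap a b * σ = π := by
    rw [hσ, ← mul_assoc, Equiv.swap_mul_self, one_mul]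
  have hπσ : ∀ x y : α, π.SameCycle x y → σ.SameCycle x y := by
    intro x y hxy
    exact sameCycle_of_swap_mul σ hσab (x := x) (y := y) (by rw [hswapσ]; exact hxy)
  let Qπ := MulAction.orbitRel.Quotient (Subgroup.zpowers π) α
  let Qσ := MulAction.orbitRel.Quotient (Subgroup.zpowers σ) α
  let G : Qπ → Qσ := Quotient.lift (fun x => (Quotient.mk'' x : Qσ))
    (fun x y hr => (orbitRel_mk_eq_iff σ x y).2
      (hπσ x y ((orbitRel_mk_eq_iff π x y).1 (Quotient.sound hr))))
  have hG : ∀ x : α, G (Quotient.mk'' x) = Quotient.mk'' x := fun _ => rfl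
  let B : Qπ := Quotient.mk'' b
  let F : {c : Qπ // c ≠ B} → Qσ := fun c => G c.1
  have hFbij : Function.Bijective F := by
    constructor
    · rintro ⟨c, hc⟩ ⟨d, hd⟩ hcd
      induction c using Quotient.inductionOn' with
      | h x =>
      induction d using Quotient.inductionOn' with
      | h y =>
      simp only [F, hG] at hcd
      have hxy : σ.SameCycle x y := (orbitRel_mk_eq_iff σ x y).1 hcd
      rcases sameCycle_swap_mul_trichotomy π h (hσ ▸ hxy) with h1 | ⟨h2a, h2b⟩ | ⟨h3a, h3b⟩
      · exact Subtype.ext ((orbitRel_mk_eq_iff π x y).2 h1)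
      · exact absurd ((orbitRel_mk_eq_iff π y b).2 h2b) hd
      · exact absurd ((orbitRel_mk_eq_iff π x b).2 h3a) hc
    · intro d
      induction d using Quotient.inductionOn' with
      | h z =>
      by_cases hzb : π.SameCycle z b
      · refine ⟨⟨Quotient.mk'' a, fun hc => h ((orbitRel_mk_eq_iff π a b).1 hc)⟩, ?_⟩
        show G (Quotient.mk'' a) = Quotient.mk'' z
        rw [hG]
        exact (orbitRel_mk_eq_iff σ a z).2 (hσab.trans (hπσ z b hzb).symm)
      · refine ⟨⟨Quotient.mk'' z, fun hc => hzb ((orbitRel_mk_eq_iff π z b).1 hc)⟩, ?_⟩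
        exact hG z
  letI : Fintype Qπ := Fintype.ofFinite _
  letI : Fintype Qσ := Fintype.ofFinite _
  have hcard1 : Nat.card Qσ = Nat.card {c : Qπ // c ≠ B} :=
    (Nat.card_congr (Equiv.ofBijective F hFbij)).symm
  have hcard2 : Fintype.card {c : Qπ // c ≠ B} = Fintype.card Qπ - 1 := by
    have := Fintype.card_subtype_compl (fun c : Qπ => c = B)
    simpa [Fintype.card_subtype_eq] using this
  have hpos : 1 ≤ Fintype.card Qπ := Fintype.card_pos_iff.2 ⟨B⟩
  have : cycleCount π = Nat.card Qπ := by
    rw [cycleCount, Nat.card_eq_fintype_card]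
  have hσc : cycleCount σ = Nat.card Qσ := by
    rw [cycleCount, Nat.card_eq_fintype_card]
  rw [this, hσc, hcard1, Nat.card_eq_fintype_card, Nat.card_eq_fintype_card, hcard2]
  omega

end Aux

/-- Composing a permutation of a finite set with a transposition changes the number of
its cycles by exactly one: the combinatorial form of the fact that an
orientation-preserving Morse modification of index 1 on a closed oriented 1-manifold
changes the number of connected components by exactly one. -/
theorem cycleCount_swap_mul
    {α : Type*} [Fintype α] [DecidableEq α]
    (π : Equiv.Perm α) (a b : α) (hab : a ≠ b) :
    cycleCount (Equiv.swap a b * π) = cycleCount π + 1 ∨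
      cycleCount π = cycleCount (Equiv.swap a b * π) + 1 := by
  by_cases hsc : π.SameCycle a b
  · left
    have hσ : ¬ (Equiv.swap a b * π).SameCycle a b :=
      not_sameCycle_swap_mul_of π hab hsc
    have hkey := cycleCount_merge (Equiv.swap a b * π) hab hσ
    rwa [show Equiv.swap a b * (Equiv.swap a b * π) = π by
      rw [← mul_assoc, Equiv.swap_mul_self, one_mul]] at hkey
  · right
    exact cycleCount_merge π hab hsc
end

section
/- Let (E, σ, τ) be a chord diagram with orientation c : E → Bool, and let ρ : Equiv.Perm E be an involution (ρ * ρ = 1) such that: (a) for every x with ρ x ≠ x one has c (ρ x) ≠ c x, and (b) for every x, ρ x = x if and only if ρ (τ x) = τ x (the support of ρ is τ-invariant). Then ρ * τ * ρ is a fixed-point-free involution and c is an orientation of the chord diagram (E, σ, ρ * τ * ρ). (This is the mechanism by which Reidemeister moves that exchange chord endpoints within σ-adjacent pairs — in particular the third Reidemeister move — preserve orientability of chord diagrams, with the same orientation.) -/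
/-- If `c` is an orientation of the chord diagram `(E, σ, τ)` and `ρ` is an involution
which reverses the color `c` on its support and whose support is `τ`-invariant, then
`ρ * τ * ρ` is a fixed-point-free involution and `c` is an orientation of the chord
diagram `(E, σ, ρ * τ * ρ)`. -/
theorem isOrientation_conj_involution
    {E : Type*} [Fintype E] [DecidableEq E]
    (σ τ : Equiv.Perm E)
    (hτinv : τ * τ = 1) (hτfix : ∀ x : E, τ x ≠ x)
    (c : E → Bool) (hc : IsOrientation σ τ c)
    (ρ : Equiv.Perm E) (hρ : ρ * ρ = 1)
    (ha : ∀ x : E, ρ x ≠ x → c (ρ x) ≠ c x)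
    (hb : ∀ x : E, ρ x = x ↔ ρ (τ x) = τ x) :
    (ρ * τ * ρ) * (ρ * τ * ρ) = 1 ∧ (∀ x : E, (ρ * τ * ρ) x ≠ x) ∧
      IsOrientation σ (ρ * τ * ρ) c := by
  have hρ' : ∀ x : E, ρ (ρ x) = x := fun x => by
    simpa [Equiv.Perm.mul_apply] using DFunLike.congr_fun hρ x
  have hτ' : ∀ x : E, τ (τ x) = x := fun x => by
    simpa [Equiv.Perm.mul_apply] using DFunLike.congr_fun hτinv x
  refine ⟨?_, ?_, ?_⟩
  · ext x
    simp [Equiv.Perm.mul_apply, hρ', hτ']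
  · intro x h
    simp only [Equiv.Perm.mul_apply] at h
    have : τ (ρ x) = ρ x := by
      have := congrArg ρ h
      rwa [hρ'] at this
    exact hτfix _ this
  · intro x
    refine ⟨(hc x).1, ?_⟩
    simp only [Equiv.Perm.mul_apply]
    by_cases hx : ρ x = x
    · have h2 : ρ (τ x) = τ x := (hb x).mp hx
      rw [hx, h2]
      exact (hc x).2
    · have h1 : c (ρ x) ≠ c x := ha x hx
      have h2 : c (τ (ρ x)) ≠ c (ρ x) := (hc (ρ x)).2
      have h3 : ρ (τ (ρ x)) ≠ τ (ρ x) := by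
        intro h
        have := (hb (ρ x)).mpr h
        rw [hρ'] at this
        exact hx this.symm
      have h4 : c (ρ (τ (ρ x))) ≠ c (τ (ρ x)) := ha _ h3
      have : c (τ (ρ x)) = c x := by
        revert h1 h2; cases c x <;> cases c (ρ x) <;> cases c (τ (ρ x)) <;> simp
      rw [this] at h4
      exact h4
end

section
/- The chord diagram (Fin 4, finRotate 4, (Equiv.swap 0 2) * (Equiv.swap 1 3)) — a single base circle carrying two interleaved chords — is not orientable, whereas the chord diagram (Fin 4, (Equiv.swap 0 1) * (Equiv.swap 2 3), (Equiv.swap 0 2) * (Equiv.swap 1 3)) — two base circles connected by two chords — is orientable. (These two diagrams have homeomorphic quotient four-valent graphs, so the obstruction to orientability of a chord diagram is not determined by the quotient graph obtained by contracting the chords.) -/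
/-- The chord diagram with one base circle carrying two interleaved chords
(`Fin 4`, `finRotate 4`, `swap 0 2 * swap 1 3`) is not orientable, while the chord
diagram with two base circles connected by two chords
(`Fin 4`, `swap 0 1 * swap 2 3`, `swap 0 2 * swap 1 3`) is orientable — although the
two diagrams have homeomorphic quotient four-valent graphs, so the obstruction to
orientability is not determined by the quotient graph. -/
theorem orientability_not_determined_by_quotient_graph :
    ¬ Orientable (finRotate 4)
        ((Equiv.swap (0 : Fin 4) 2) * (Equiv.swap (1 : Fin 4) 3)) ∧
      Orientable ((Equiv.swap (0 : Fin 4) 1) * (Equiv.swap (2 : Fin 4) 3))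
        ((Equiv.swap (0 : Fin 4) 2) * (Equiv.swap (1 : Fin 4) 3)) := by
  constructor
  · rintro ⟨c, hc⟩
    have e1 : finRotate 4 (0 : Fin 4) = 1 := by decide
    have e2 : finRotate 4 (1 : Fin 4) = 2 := by decide
    have e3 : ((Equiv.swap (0 : Fin 4) 2) * (Equiv.swap (1 : Fin 4) 3)) 0 = 2 := by decide
    have h0 := (hc 0).1
    have h1 := (hc 1).1
    have h2 := (hc 0).2
    rw [e1] at h0
    rw [e2] at h1
    rw [e3] at h2
    revert h0 h1 h2
    cases c 0 <;> cases c 1 <;> cases c 2 <;> simp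
  · refine ⟨![false, true, true, false], fun x => ?_⟩
    fin_cases x <;> exact ⟨by decide, by decide⟩
end
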